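/- arXiv:2403.09610 — 3 statements merged into one kernel-verified Lean document; each statement's English description precedes it below -/
import Mathlib

section
/- The proximity operator of the proximal comixture is given explicitly by prox_{comix(L_k,g_k)_{1≤k≤p}} = Id − ∑_{k=1}^p α_k L_k* ∘ (Id − prox_{g_k}) ∘ L_k, where for h ∈ Γ₀(K) on a real Hilbert space K, prox_h(x) is the unique minimizer over z ∈ K of h(z) + ‖x−z‖²/2. -/
open scoped RealInnerProductSpace
open Filter

noncomputable section

variable {K : Type*} [NormedAddCommGroup K] [InnerProductSpace ℝ K]

/-- Normalized quadratic kernel `Q_K = ‖·‖²/2` (as an extended real). -/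
def QK (x : K) : EReal := ((‖x‖ ^ 2 / 2 : ℝ) : EReal)

/-- Fenchel conjugate `f* : u ↦ sup_x (⟨x,u⟩ − f(x))`. -/
def fconj (f : K → EReal) (u : K) : EReal := ⨆ x : K, ((⟪x, u⟫ : ℝ) : EReal) - f x

/-- Moreau envelope `f □ Q_K : x ↦ inf_z (f(z) + ‖x−z‖²/2)`. -/
def menv (f : K → EReal) (x : K) : EReal := ⨅ z : K, f z + QK (x - z)

/-- Convexity of an extended-real-valued function. -/
def ConvexFnE (f : K → EReal) : Prop :=
  ∀ x y : K, ∀ a b : ℝ, 0 ≤ a → 0 ≤ b → a + b = 1 →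
    f (a • x + b • y) ≤ (a : EReal) * f x + (b : EReal) * f y

/-- Properness: nowhere `−∞` and somewhere finite. -/
def ProperFn (f : K → EReal) : Prop := (∀ x, f x ≠ ⊥) ∧ ∃ x, f x ≠ ⊤

/-- The class `Γ₀(K)` of proper lower semicontinuous convex functions. -/
def Gamma0 (f : K → EReal) : Prop := ProperFn f ∧ LowerSemicontinuous f ∧ ConvexFnE f

/-- `P` is the proximity operator of `g`: for every `x`, `P x` is the unique
minimizer of `z ↦ g(z) + ‖x−z‖²/2`. -/
def IsProx (g : K → EReal) (P : K → K) : Prop :=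
  ∀ x : K,
    (∀ z : K, g (P x) + QK (x - P x) ≤ g z + QK (x - z)) ∧
    (∀ z : K, (∀ w : K, g z + QK (x - z) ≤ g w + QK (x - w)) → z = P x)

/-- The convex subdifferential of `f` at `x`. -/
def subdiff (f : K → EReal) (x : K) : Set K :=
  {u : K | ∀ z : K, ((⟪z - x, u⟫ : ℝ) : EReal) + f x ≤ f z}

variable {H : Type*} [NormedAddCommGroup H] [InnerProductSpace ℝ H]
  {p : ℕ} {G : Fin p → Type*} [∀ k, NormedAddCommGroup (G k)]
  [∀ k, InnerProductSpace ℝ (G k)]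

/-- The proximal comixture `comix(L_k, g_k)_{1≤k≤p}
  = ((∑_k α_k (g_k □ Q_{G_k}) ∘ L_k)* − Q_H)*`. -/
def comix (L : ∀ k, H →L[ℝ] G k) (g : ∀ k, (G k) → EReal) (α : Fin p → ℝ) :
    H → EReal :=
  fconj (fun u => fconj (fun x => ∑ k, (α k : EReal) * menv (g k) (L k x)) u - QK u)

/-! If `q = prox_g b` with `g` convex and proper, then `b - q` is a subgradient of `g` at `q`;
hence `g □ Q` is real-valued and lies between its affine approximation at `b` with slope
`b - q` and that approximation plus `‖· - b‖²/2`. This two-sided bound is preserved under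
composition with an operator of norm `≤ 1` and under convex combinations, so
`S = ∑ α_k (g_k □ Q) ∘ L_k` satisfies it at `x` with slope
`w = ∑ α_k L_k* (L_k x - prox_{g_k} (L_k x))`. For such an `S`, the lower bound gives
`(S* - Q)* z + Q (x - z) ≥ S x + ‖z - (x - w)‖²/2` and the upper bound gives
`(S* - Q)* (x - w) + Q w ≤ S x`, so `x - w` is the unique minimizer. -/

open Topology

theorem EReal.coe_finset_sum {ι : Type*} (s : Finset ι) (f : ι → ℝ) :
    ((∑ i ∈ s, f i : ℝ) : EReal) = ∑ i ∈ s, (f i : EReal) :=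
  map_sum (⟨⟨(↑), EReal.coe_zero⟩, EReal.coe_add⟩ : ℝ →+ EReal) f s

theorem coe_add_QK {E : Type*} [NormedAddCommGroup E] [InnerProductSpace ℝ E] (r : ℝ) (v : E) :
    (r : EReal) + QK v = ((r + ‖v‖ ^ 2 / 2 : ℝ) : EReal) := by
  rw [QK, ← EReal.coe_add]

/-- `w` is a subgradient of `S` at `x`, and `S` obeys there the upper quadratic bound of a
function with `1`-Lipschitz gradient. -/
def HasOneSmoothGradAt (S : K → ℝ) (w x : K) : Prop :=
  ∀ y, S x + ⟪y - x, w⟫ ≤ S y ∧ S y ≤ S x + ⟪y - x, w⟫ + ‖y - x‖ ^ 2 / 2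

theorem HasOneSmoothGradAt.comp_clm [CompleteSpace K] [CompleteSpace H] {S : H → ℝ} {w : H}
    {A : K →L[ℝ] H} {x : K} (hS : HasOneSmoothGradAt S w (A x)) (hA : ‖A‖ ≤ 1) :
    HasOneSmoothGradAt (S ∘ A) (ContinuousLinearMap.adjoint A w) x := by
  intro y
  have hinner : ⟪y - x, ContinuousLinearMap.adjoint A w⟫ = ⟪A y - A x, w⟫ := by
    rw [ContinuousLinearMap.adjoint_inner_right, map_sub]
  have hnorm : ‖A y - A x‖ ^ 2 ≤ ‖y - x‖ ^ 2 := by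
    rw [← map_sub]
    gcongr
    exact (A.le_of_opNorm_le hA (y - x)).trans_eq (one_mul _)
  obtain ⟨hlow, hup⟩ := hS (A y)
  simp only [Function.comp_apply, hinner]
  constructor <;> linarith

theorem HasOneSmoothGradAt.sum {ι : Type*} {s : Finset ι} {S : ι → K → ℝ} {w : ι → K} {x : K}
    {α : ι → ℝ} (hS : ∀ i ∈ s, HasOneSmoothGradAt (S i) (w i) x) (hα : ∀ i ∈ s, 0 ≤ α i)
    (hαsum : ∑ i ∈ s, α i = 1) :
    HasOneSmoothGradAt (fun y => ∑ i ∈ s, α i * S i y) (∑ i ∈ s, α i • w i) x := by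
  intro y
  have hinner : ⟪y - x, ∑ i ∈ s, α i • w i⟫ = ∑ i ∈ s, α i * ⟪y - x, w i⟫ := by
    simp only [inner_sum, real_inner_smul_right]
  have hquad : ‖y - x‖ ^ 2 / 2 = ∑ i ∈ s, α i * (‖y - x‖ ^ 2 / 2) := by
    rw [← Finset.sum_mul, hαsum, one_mul]
  rw [hinner, hquad, ← Finset.sum_add_distrib, ← Finset.sum_add_distrib]
  constructor <;> refine Finset.sum_le_sum fun i hi => ?_ <;> simp only [← mul_add]
  · exact mul_le_mul_of_nonneg_left (hS i hi y).1 (hα i hi)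
  · exact mul_le_mul_of_nonneg_left (hS i hi y).2 (hα i hi)

section MoreauEnvelope

variable {g : K → EReal} {b q : K}

theorem ProperFn.ne_top_of_minimizes (hg : ProperFn g)
    (hq : ∀ z, g q + QK (b - q) ≤ g z + QK (b - z)) : g q ≠ ⊤ := by
  obtain ⟨z, hz⟩ := hg.2
  intro htop
  have hle := hq z
  lift g z to ℝ using ⟨hz, hg.1 z⟩ with s
  rw [htop, QK, EReal.top_add_coe, coe_add_QK, top_le_iff] at hle
  exact EReal.coe_ne_top _ hle

theorem sub_mem_subdiff_of_minimizes (hg : ProperFn g) (hconv : ConvexFnE g)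
    (hq : ∀ z, g q + QK (b - q) ≤ g z + QK (b - z)) : b - q ∈ subdiff g q := by
  intro z
  lift g q to ℝ using ⟨hg.ne_top_of_minimizes hq, hg.1 q⟩ with r hr
  rcases eq_or_ne (g z) ⊤ with hz | hz
  · rw [hz]; exact le_top
  lift g z to ℝ using ⟨hz, hg.1 z⟩ with s hs
  rw [← EReal.coe_add, EReal.coe_le_coe_iff]
  have hsmall : ∀ t : ℝ, 0 < t → t ≤ 1 → ⟪z - q, b - q⟫ + r ≤ s + t * (‖z - q‖ ^ 2 / 2) := by
    intro t ht0 ht1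
    have hconv_t : g ((1 - t) • q + t • z) ≤ (((1 - t) * r + t * s : ℝ) : EReal) := by
      have := hconv q z (1 - t) t (by linarith) ht0.le (by ring)
      rwa [← hr, ← hs, ← EReal.coe_mul, ← EReal.coe_mul, ← EReal.coe_add] at this
    have hmin := (hq _).trans (add_le_add_left hconv_t _)
    rw [coe_add_QK, coe_add_QK, EReal.coe_le_coe_iff] at hmin
    have hsplit : b - ((1 - t) • q + t • z) = (b - q) - t • (z - q) := by module
    rw [hsplit, norm_sub_sq_real (b - q), real_inner_smul_right, norm_smul, mul_pow,
      Real.norm_eq_abs, sq_abs, real_inner_comm] at hmin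
    have : t * (⟪z - q, b - q⟫ + r) ≤ t * (s + t * (‖z - q‖ ^ 2 / 2)) := by linarith
    exact le_of_mul_le_mul_left this ht0
  have hlim : Tendsto (fun t : ℝ => s + t * (‖z - q‖ ^ 2 / 2)) (𝓝[>] 0) (𝓝 s) := by
    have h : Tendsto (fun t : ℝ => s + t * (‖z - q‖ ^ 2 / 2)) (𝓝 0)
        (𝓝 (s + 0 * (‖z - q‖ ^ 2 / 2))) :=
      tendsto_const_nhds.add (tendsto_id.mul tendsto_const_nhds)
    rw [zero_mul, add_zero] at h
    exact h.mono_left nhdsWithin_le_nhds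
  exact ge_of_tendsto hlim
    (eventually_of_mem (Ioc_mem_nhdsGT one_pos) fun t ht => hsmall t ht.1 ht.2)

theorem coe_le_menv_of_mem_subdiff {u : K} {r : ℝ} (hr : g q = r) (hu : u ∈ subdiff g q)
    (y : K) : ((r + ⟪y - q, u⟫ - ‖u‖ ^ 2 / 2 : ℝ) : EReal) ≤ menv g y := by
  refine le_iInf fun z => le_trans ?_ (add_le_add_left (hu z) _)
  rw [hr, ← EReal.coe_add, coe_add_QK, EReal.coe_le_coe_iff]
  have hsq : 0 ≤ ‖(y - z) - u‖ ^ 2 := sq_nonneg _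
  have hsplit : ⟪y - q, u⟫ = ⟪y - z, u⟫ + ⟪z - q, u⟫ := by
    rw [← inner_add_left, sub_add_sub_cancel]
  rw [norm_sub_sq_real] at hsq
  linarith

theorem menv_toReal_bounds (hg : ProperFn g) (hconv : ConvexFnE g)
    (hq : ∀ z, g q + QK (b - q) ≤ g z + QK (b - z)) (y : K) :
    ((menv g y).toReal : EReal) = menv g y ∧
      (g q).toReal + ⟪y - q, b - q⟫ - ‖b - q‖ ^ 2 / 2 ≤ (menv g y).toReal ∧
      (menv g y).toReal ≤ (g q).toReal + ‖y - q‖ ^ 2 / 2 := by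
  have hr : g q = (g q).toReal := (EReal.coe_toReal (hg.ne_top_of_minimizes hq) (hg.1 q)).symm
  have hlow := coe_le_menv_of_mem_subdiff hr (sub_mem_subdiff_of_minimizes hg hconv hq) y
  have hup : menv g y ≤ (((g q).toReal + ‖y - q‖ ^ 2 / 2 : ℝ) : EReal) := by
    rw [← coe_add_QK, ← hr]
    exact iInf_le _ q
  lift menv g y to ℝ using ⟨(hup.trans_lt (EReal.coe_lt_top _)).ne,
    ((EReal.bot_lt_coe _).trans_le hlow).ne'⟩ with m
  exact ⟨rfl, EReal.coe_le_coe_iff.1 hlow, EReal.coe_le_coe_iff.1 hup⟩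

theorem hasOneSmoothGradAt_menv (hg : ProperFn g) (hconv : ConvexFnE g)
    (hq : ∀ z, g q + QK (b - q) ≤ g z + QK (b - z)) :
    HasOneSmoothGradAt (fun y => (menv g y).toReal) (b - q) b := by
  intro y
  obtain ⟨-, hb_low, hb_up⟩ := menv_toReal_bounds hg hconv hq b
  obtain ⟨-, hy_low, hy_up⟩ := menv_toReal_bounds hg hconv hq y
  have hsplit : y - q = (y - b) + (b - q) := (sub_add_sub_cancel y b q).symm
  rw [real_inner_self_eq_norm_sq] at hb_low
  rw [hsplit, inner_add_left, real_inner_self_eq_norm_sq] at hy_low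
  rw [hsplit, norm_add_sq_real] at hy_up
  constructor <;> linarith

end MoreauEnvelope

section ConjugateOfSmooth

variable {S : K → ℝ} {w x : K}

theorem fconj_coe_le_of_affine_minorant (h : ∀ y, S x + ⟪y - x, w⟫ ≤ S y) :
    fconj (fun y => (S y : EReal)) w ≤ ((⟪x, w⟫ - S x : ℝ) : EReal) :=
  iSup_le fun y => by
    rw [← EReal.coe_sub, EReal.coe_le_coe_iff]
    have hy := h y
    rw [inner_sub_left] at hy
    linarith

theorem coe_le_fconj_coe_of_quadratic_majorant
    (h : ∀ y, S y ≤ S x + ⟪y - x, w⟫ + ‖y - x‖ ^ 2 / 2) (u : K) :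
    ((⟪x, u⟫ - S x + ‖u - w‖ ^ 2 / 2 : ℝ) : EReal) ≤ fconj (fun y => (S y : EReal)) u := by
  refine le_trans ?_ (le_iSup (fun y => ((⟪y, u⟫ : ℝ) : EReal) - (S y : EReal)) (x + (u - w)))
  rw [← EReal.coe_sub, EReal.coe_le_coe_iff]
  have hS := h (x + (u - w))
  have hsq : ⟪u - w, u⟫ - ⟪u - w, w⟫ = ‖u - w‖ ^ 2 := by
    rw [← inner_sub_right, real_inner_self_eq_norm_sq]
  rw [add_sub_cancel_left] at hS
  rw [inner_add_left]
  linarith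

theorem coe_le_fconj_fconj_sub_QK_add_QK (h : ∀ y, S x + ⟪y - x, w⟫ ≤ S y) (z : K) :
    ((S x + ‖z - (x - w)‖ ^ 2 / 2 : ℝ) : EReal) ≤
      fconj (fun u => fconj (fun y => (S y : EReal)) u - QK u) z + QK (x - z) := by
  refine le_trans ?_ (add_le_add_left (le_iSup _ w) _)
  refine le_trans ?_ (add_le_add_left
    (EReal.sub_le_sub le_rfl (EReal.sub_le_sub (fconj_coe_le_of_affine_minorant h) le_rfl)) _)
  have hsplit : z - (x - w) = w - (x - z) := by abel
  rw [QK, ← EReal.coe_sub, ← EReal.coe_sub, coe_add_QK, EReal.coe_le_coe_iff, hsplit,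
    norm_sub_sq_real, inner_sub_right, real_inner_comm w x]
  linarith

theorem fconj_fconj_sub_QK_le (h : ∀ y, S y ≤ S x + ⟪y - x, w⟫ + ‖y - x‖ ^ 2 / 2) :
    fconj (fun u => fconj (fun y => (S y : EReal)) u - QK u) (x - w) ≤
      ((S x - ‖w‖ ^ 2 / 2 : ℝ) : EReal) := by
  refine iSup_le fun u => le_trans (EReal.sub_le_sub le_rfl
    (EReal.sub_le_sub (coe_le_fconj_coe_of_quadratic_majorant h u) le_rfl)) ?_
  rw [QK, ← EReal.coe_sub, ← EReal.coe_sub, EReal.coe_le_coe_iff, norm_sub_sq_real,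
    inner_sub_right, real_inner_comm u x]
  linarith

end ConjugateOfSmooth

theorem unique_minimizer_of_quadratic_growth {E : Type*} [NormedAddCommGroup E] {F : E → EReal}
    {z₀ : E} {c : ℝ} (hlow : ∀ z, ((c + ‖z - z₀‖ ^ 2 / 2 : ℝ) : EReal) ≤ F z) (hup : F z₀ ≤ c) :
    (∀ z, F z₀ ≤ F z) ∧ ∀ z, (∀ v, F z ≤ F v) → z = z₀ := by
  refine ⟨fun z => hup.trans (le_trans ?_ (hlow z)), fun z hz => ?_⟩
  · exact EReal.coe_le_coe_iff.2 (le_add_of_nonneg_right (by positivity))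
  · have hle := EReal.coe_le_coe_iff.1 ((hlow z).trans ((hz z₀).trans hup))
    have hsq : ‖z - z₀‖ ^ 2 = 0 := le_antisymm (by linarith) (sq_nonneg _)
    simpa [sub_eq_zero] using hsq

theorem isProx_fconj_fconj_sub_QK {S : K → ℝ} {P : K → K}
    (hS : ∀ x, HasOneSmoothGradAt S (x - P x) x) :
    IsProx (fconj (fun u => fconj (fun y => (S y : EReal)) u - QK u)) P := by
  intro x
  have hP : x - (x - P x) = P x := sub_sub_cancel x (P x)
  refine unique_minimizer_of_quadratic_growth (F := fun z => _ + QK (x - z)) (c := S x)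
    (fun z => ?_) ?_
  · simpa only [hP] using coe_le_fconj_fconj_sub_QK_add_QK (fun y => (hS x y).1) z
  · have h := add_le_add_left (fconj_fconj_sub_QK_le (fun y => (hS x y).2)) (QK (x - P x))
    rwa [hP, coe_add_QK, sub_add_cancel] at h

/-- Proposition 3.2(ii): the proximity operator of the proximal comixture is
`Id − ∑_k α_k L_k* ∘ (Id − prox_{g_k}) ∘ L_k`. -/
theorem prox_comix [CompleteSpace H] [∀ k, CompleteSpace (G k)]
    (L : ∀ k, H →L[ℝ] G k) (g : ∀ k, (G k) → EReal) (α : Fin p → ℝ)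
    (hg : ∀ k, Gamma0 (g k)) (hL : ∀ k, ‖L k‖ ≤ 1)
    (hα : ∀ k, α k ∈ Set.Ioc (0 : ℝ) 1) (hαsum : ∑ k, α k = 1)
    (P : ∀ k, G k → G k) (hP : ∀ k, IsProx (g k) (P k)) :
    IsProx (comix L g α)
      (fun x => x - ∑ k, α k •
        (ContinuousLinearMap.adjoint (L k)) (L k x - P k (L k x))) := by
  have hmenv : ∀ k z, ((menv (g k) z).toReal : EReal) = menv (g k) z := fun k z =>
    (menv_toReal_bounds (hg k).1 (hg k).2.2 (hP k z).1 z).1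
  have hcomix : comix L g α = fconj (fun u => fconj (fun y =>
      ((∑ k, α k * (menv (g k) (L k y)).toReal : ℝ) : EReal)) u - QK u) := by
    simp only [comix, EReal.coe_finset_sum, EReal.coe_mul, hmenv]
  rw [hcomix]
  refine isProx_fconj_fconj_sub_QK fun x => ?_
  rw [sub_sub_cancel]
  exact HasOneSmoothGradAt.sum (S := fun k => (fun z => (menv (g k) z).toReal) ∘ L k)
    (fun k _ => (hasOneSmoothGradAt_menv (hg k).1 (hg k).2.2 (hP k (L k x)).1).comp_clm (hL k))
    (fun k _ => (hα k).1.le) hαsum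

end
end

section
/- If the combined operator is a coisometry, the proximal comixture reduces to the standard composite average: let 𝒢 be the product vector space G₁×⋯×G_p equipped with the scalar product ((y_k),(v_k)) ↦ ∑_{k=1}^p α_k⟨y_k,v_k⟩, and let L : H → 𝒢 : x ↦ (L_k x)_{1≤k≤p}. If L ∘ L* = Id on 𝒢, then comix(L_k,g_k)_{1≤k≤p} = ∑_{k=1}^p α_k g_k ∘ L_k. -/
/-!
Put `ψ = ∑ₖ αₖ gₖ ∘ Lₖ`. Testing each envelope `gₖ □ Q` at `Lₖ z` and using `‖Lₖ‖ ≤ 1` and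
`∑ₖ αₖ = 1` gives `∑ₖ αₖ (gₖ □ Q)(Lₖ x) ≤ (ψ □ Q_H)(x)`. Conversely, for `z = (zₖ)ₖ ∈ 𝒢` the point
`x + L*(z - Lx)` is mapped by `L` onto `z`, and `L L* = Id` makes its squared distance to `x` equal
to `∑ₖ αₖ ‖zₖ - Lₖ x‖²`, so the two envelopes agree. Since `(ψ □ Q_H)* = ψ* + Q_H`, the comixture
is `ψ**`, which is `ψ` by the Fenchel–Moreau theorem because `ψ ∈ Γ₀(H)`.
-/

open scoped RealInnerProductSpace
open Filter

noncomputable section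

variable {K : Type*} [NormedAddCommGroup K] [InnerProductSpace ℝ K]

variable {H : Type*} [NormedAddCommGroup H] [InnerProductSpace ℝ H]
  {p : ℕ} {G : Fin p → Type*} [∀ k, NormedAddCommGroup (G k)]
  [∀ k, InnerProductSpace ℝ (G k)]

namespace EReal

lemma coe_finset_sum_s3 {ι : Type*} (s : Finset ι) (f : ι → ℝ) :
    ((∑ i ∈ s, f i : ℝ) : EReal) = ∑ i ∈ s, (f i : EReal) :=
  map_sum (⟨⟨Real.toEReal, coe_zero⟩, coe_add⟩ : ℝ →+ EReal) f s

lemma coe_sub_coe_sub (a : ℝ) (x : EReal) : (a : EReal) - ((a : EReal) - x) = x := by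
  induction x using EReal.rec <;> simp [← EReal.coe_sub]

lemma coe_sub_add_coe (a q : ℝ) (x : EReal) :
    (a : EReal) - (x + q) = ((a - q : ℝ) : EReal) - x := by
  induction x using EReal.rec <;> simp [← EReal.coe_sub, ← EReal.coe_add]; ring

lemma coe_add_sub (a q : ℝ) (x : EReal) : ((a + q : ℝ) : EReal) - x = ((a : EReal) - x) + q := by
  induction x using EReal.rec <;> simp [← EReal.coe_sub, ← EReal.coe_add]; ring

lemma le_of_forall_le_coe {x y : EReal} (h : ∀ t : ℝ, y ≤ t → x ≤ t) : x ≤ y := by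
  by_contra hyx
  obtain ⟨t, hyt, htx⟩ := EReal.lt_iff_exists_real_btwn.1 (not_le.1 hyx)
  exact (h t hyt.le).not_gt htx

lemma continuous_add_coe (a : ℝ) : Continuous fun x : EReal => x + a :=
  continuous_iff_continuousAt.2 fun x =>
    ContinuousAt.comp (x := x) (f := fun y : EReal => (y, (a : EReal)))
      (continuousAt_add (.inr (coe_ne_bot a)) (.inr (coe_ne_top a)))
      (continuousAt_id.prodMk continuousAt_const)

lemma continuous_coe_sub (a : ℝ) : Continuous fun x : EReal => (a : EReal) - x :=
  continuous_iff_continuousAt.2 fun x =>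
    ContinuousAt.comp (x := x) (f := fun y : EReal => ((a : EReal), -y))
      (continuousAt_add (.inl (coe_ne_top a)) (.inl (coe_ne_bot a)))
      (continuousAt_const.prodMk continuous_neg.continuousAt)

lemma iSup_add_coe {ι : Sort*} (T : ι → EReal) (a : ℝ) : (⨆ i, T i) + a = ⨆ i, (T i + a) :=
  Monotone.map_iSup_of_continuousAt (f := fun x : EReal => x + a)
    (continuous_add_coe a).continuousAt (fun _ _ h => add_le_add_left h _) (by simp)

lemma coe_sub_iInf {ι : Sort*} (T : ι → EReal) (a : ℝ) :
    (a : EReal) - ⨅ i, T i = ⨆ i, ((a : EReal) - T i) :=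
  Antitone.map_iInf_of_continuousAt (f := fun x : EReal => (a : EReal) - x)
    (continuous_coe_sub a).continuousAt (fun _ _ h => sub_le_sub le_rfl h) (by simp)

lemma coe_mul_add_coe {c : ℝ} (hc : 0 ≤ c) (x : EReal) (b : ℝ) :
    (c : EReal) * (x + b) = c * x + ((c * b : ℝ) : EReal) := by
  rw [left_distrib_of_nonneg_of_ne_top (EReal.coe_nonneg.2 hc) (coe_ne_top c), coe_mul]

lemma coe_mul_ne_bot {c : ℝ} (hc : 0 ≤ c) {x : EReal} (hx : x ≠ ⊥) : (c : EReal) * x ≠ ⊥ :=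
  (mul_ne_bot _ _).2
    ⟨.inl (coe_ne_bot c), .inr hx, .inl (coe_ne_top c), .inl (EReal.coe_nonneg.2 hc)⟩

lemma coe_mul_ne_top {c : ℝ} (hc : 0 ≤ c) {x : EReal} (hx : x ≠ ⊤) : (c : EReal) * x ≠ ⊤ :=
  (mul_ne_top _ _).2
    ⟨.inl (coe_ne_bot c), .inl (EReal.coe_nonneg.2 hc), .inl (coe_ne_top c), .inr hx⟩

lemma sum_coe_mul_add_coe {ι : Type*} (s : Finset ι) {a : ι → ℝ} (ha : ∀ i ∈ s, 0 ≤ a i)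
    (x : ι → EReal) (b : ι → ℝ) :
    ∑ i ∈ s, (a i : EReal) * (x i + b i) =
      ∑ i ∈ s, (a i : EReal) * x i + ((∑ i ∈ s, a i * b i : ℝ) : EReal) := by
  rw [coe_finset_sum_s3, ← Finset.sum_add_distrib]
  exact Finset.sum_congr rfl fun i hi => coe_mul_add_coe (ha i hi) _ _

lemma le_sum_mul_iInf {ι : Type*} [Fintype ι] {X : ι → Type*} {F : ∀ i, X i → EReal} {a : ι → ℝ}
    (ha : ∀ i, 0 ≤ a i) (hbot : ∀ i, ⨅ z, F i z ≠ ⊥) (htop : ∀ i, ⨅ z, F i z ≠ ⊤) {A : EReal}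
    (h : ∀ z : ∀ i, X i, A ≤ ∑ i, (a i : EReal) * F i (z i)) :
    A ≤ ∑ i, (a i : EReal) * ⨅ z, F i z := by
  set μ := fun i => (⨅ z, F i z).toReal
  have hμ (i : ι) : ⨅ z, F i z = μ i := (coe_toReal (htop i) (hbot i)).symm
  simp only [hμ, ← coe_mul, ← coe_finset_sum_s3]
  refine le_of_forall_lt_iff_le.1 fun b hb => ?_
  set S := ∑ i, a i * μ i
  set T := ∑ i, a i
  have hS : 0 < b - S := _root_.sub_pos.2 (EReal.coe_lt_coe_iff.1 hb)
  have hT : 0 ≤ T := Finset.sum_nonneg fun i _ => ha i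
  set ε := (b - S) / (T + 1)
  have hε : 0 < ε := _root_.div_pos hS (by linarith)
  have hεT : T * ε ≤ b - S := by
    rw [mul_div_assoc', div_le_iff₀ (by linarith)]; nlinarith
  choose z hz using fun i => iInf_lt_iff.1 (show ⨅ z, F i z < ((μ i + ε : ℝ) : EReal) by
    rw [hμ]; exact EReal.coe_lt_coe_iff.2 (lt_add_of_pos_right _ hε))
  calc A ≤ ∑ i, (a i : EReal) * F i (z i) := h z
    _ ≤ ∑ i, ((a i * (μ i + ε) : ℝ) : EReal) := Finset.sum_le_sum fun i _ => by
        rw [coe_mul]; exact mul_le_mul_of_nonneg_left (hz i).le (EReal.coe_nonneg.2 (ha i))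
    _ = ((S + T * ε : ℝ) : EReal) := by
        rw [← coe_finset_sum_s3]; simp only [mul_add, Finset.sum_add_distrib, S, T, Finset.sum_mul]
    _ ≤ b := EReal.coe_le_coe_iff.2 (by linarith)

end EReal

section Semicontinuity

variable {α : Type*} [TopologicalSpace α]

lemma LowerSemicontinuous.ereal_add {f g : α → EReal} (hf : LowerSemicontinuous f)
    (hg : LowerSemicontinuous g) : LowerSemicontinuous fun x => f x + g x := by
  intro x y hy
  obtain ⟨a, ha, b, hb, hab⟩ : ∃ a < f x, ∃ b < g x, y < a + b := by
    by_contra! h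
    exact (EReal.add_le_of_forall_lt h).not_gt hy
  filter_upwards [hf x a ha, hg x b hb] with x' hfx' hgx'
  exact hab.trans_le (add_le_add hfx'.le hgx'.le)

lemma LowerSemicontinuous.ereal_sum {ι : Type*} (s : Finset ι) {f : ι → α → EReal}
    (hf : ∀ i ∈ s, LowerSemicontinuous (f i)) : LowerSemicontinuous fun x => ∑ i ∈ s, f i x := by
  classical
  induction s using Finset.induction_on with
  | empty => simpa using lowerSemicontinuous_const
  | insert i s hi ih =>
    simp only [Finset.sum_insert hi]
    exact (hf i (s.mem_insert_self i)).ereal_add (ih fun j hj => hf j (s.mem_insert_of_mem hj))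

lemma LowerSemicontinuous.ereal_const_mul {f : α → EReal} (hf : LowerSemicontinuous f) {c : ℝ}
    (hc : 0 ≤ c) : LowerSemicontinuous fun x => (c : EReal) * f x :=
  Continuous.comp_lowerSemicontinuous (g := fun y : EReal => (c : EReal) * y)
    (continuous_iff_continuousAt.2 fun _ => EReal.Tendsto.const_mul tendsto_id
      (.inl (EReal.coe_ne_bot c)) (.inl (EReal.coe_ne_top c)))
    hf fun _ _ h => mul_le_mul_of_nonneg_left h (EReal.coe_nonneg.2 hc)

end Semicontinuity

section Convexity

variable {F : Type*} [NormedAddCommGroup F] [InnerProductSpace ℝ F]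

lemma ConvexFnE.add {f g : K → EReal} (hf : ConvexFnE f) (hg : ConvexFnE g) :
    ConvexFnE fun x => f x + g x := by
  intro x y a b ha hb hab
  have distrib (c : ℝ) (hc : 0 ≤ c) (u v : EReal) : (c : EReal) * (u + v) = c * u + c * v :=
    EReal.left_distrib_of_nonneg_of_ne_top (EReal.coe_nonneg.2 hc) (EReal.coe_ne_top c) u v
  calc f (a • x + b • y) + g (a • x + b • y)
      ≤ (a * f x + b * f y) + (a * g x + b * g y) :=
        add_le_add (hf x y a b ha hb hab) (hg x y a b ha hb hab)
    _ = a * (f x + g x) + b * (f y + g y) := by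
        rw [distrib a ha, distrib b hb]; abel

lemma ConvexFnE.sum {ι : Type*} (s : Finset ι) {f : ι → K → EReal}
    (hf : ∀ i ∈ s, ConvexFnE (f i)) : ConvexFnE fun x => ∑ i ∈ s, f i x := by
  classical
  induction s using Finset.induction_on with
  | empty => intro x y a b _ _ _; simp
  | insert i s hi ih =>
    simp only [Finset.sum_insert hi]
    exact (hf i (s.mem_insert_self i)).add (ih fun j hj => hf j (s.mem_insert_of_mem hj))

lemma ConvexFnE.const_mul {f : K → EReal} (hf : ConvexFnE f) {c : ℝ} (hc : 0 ≤ c) :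
    ConvexFnE fun x => (c : EReal) * f x := by
  intro x y a b ha hb hab
  calc (c : EReal) * f (a • x + b • y) ≤ c * (a * f x + b * f y) :=
        mul_le_mul_of_nonneg_left (hf x y a b ha hb hab) (EReal.coe_nonneg.2 hc)
    _ = a * (c * f x) + b * (c * f y) := by
        rw [EReal.left_distrib_of_nonneg_of_ne_top (EReal.coe_nonneg.2 hc) (EReal.coe_ne_top c),
          mul_left_comm, mul_left_comm (c : EReal)]

lemma ConvexFnE.comp_continuousLinearMap {f : F → EReal} (hf : ConvexFnE f) (L : K →L[ℝ] F) :
    ConvexFnE fun x => f (L x) := by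
  intro x y a b ha hb hab
  simpa only [map_add, map_smul] using hf (L x) (L y) a b ha hb hab

end Convexity

lemma isClosed_real_epigraph {X : Type*} [TopologicalSpace X] {f : X → EReal}
    (hf : LowerSemicontinuous f) : IsClosed {q : X × ℝ | f q.1 ≤ q.2} :=
  hf.isClosed_epigraph.preimage
    (continuous_fst.prodMk (continuous_coe_real_ereal.comp continuous_snd))

lemma ConvexFnE.convex_real_epigraph {f : K → EReal} (hf : ConvexFnE f) :
    Convex ℝ {q : K × ℝ | f q.1 ≤ q.2} := by
  intro q hq q' hq' a b ha hb hab
  calc f (a • q.1 + b • q'.1) ≤ a * f q.1 + b * f q'.1 := hf _ _ a b ha hb hab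
    _ ≤ a * q.2 + b * q'.2 :=
        add_le_add (mul_le_mul_of_nonneg_left hq (EReal.coe_nonneg.2 ha))
          (mul_le_mul_of_nonneg_left hq' (EReal.coe_nonneg.2 hb))
    _ = ((a * q.2 + b * q'.2 : ℝ) : EReal) := by norm_cast

lemma Gamma0.exists_epigraph_separation {f : K → EReal} (hf : Gamma0 f) {x₀ : K} {r : ℝ}
    (hr : (r : EReal) < f x₀) :
    ∃ (φ : K →L[ℝ] ℝ) (c s : ℝ), c ≤ 0 ∧ (∀ x (t : ℝ), f x ≤ t → φ x + c * t < s) ∧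
      s < φ x₀ + c * r := by
  obtain ⟨Φ, s, hΦ, hs⟩ := geometric_hahn_banach_closed_point hf.2.2.convex_real_epigraph
    (isClosed_real_epigraph hf.2.1) (show (x₀, r) ∉ _ from hr.not_ge)
  set φ := Φ.comp (ContinuousLinearMap.inl ℝ K ℝ)
  set c := Φ (0, 1)
  have hΦ_apply (x : K) (t : ℝ) : Φ (x, t) = φ x + c * t :=
    calc Φ (x, t) = Φ ((x, 0) + t • (0, 1)) := by simp
      _ = φ x + c * t := by rw [map_add, map_smul, smul_eq_mul, mul_comm]; rfl
  refine ⟨φ, c, s, ?_, fun x t hxt => hΦ_apply x t ▸ hΦ (x, t) hxt, hΦ_apply x₀ r ▸ hs⟩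
  by_contra! hc
  obtain ⟨x₁, hx₁⟩ := hf.1.2
  set t := max (f x₁).toReal ((s - φ x₁) / c)
  have hx₁t : f x₁ ≤ t :=
    (EReal.le_coe_toReal hx₁).trans (EReal.coe_le_coe_iff.2 (le_max_left _ _))
  have hct : s - φ x₁ ≤ c * t := by
    rw [← div_le_iff₀' hc]; exact le_max_right _ _
  linarith [hΦ_apply x₁ t ▸ hΦ (x₁, t) hx₁t]

lemma affine_minorant_of_epigraph_separation {f : K → EReal} {φ : K →L[ℝ] ℝ} {c s : ℝ}
    (hc : c < 0) (hsep : ∀ x (t : ℝ), f x ≤ t → φ x + c * t < s) (x : K) :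
    ((((-c)⁻¹ • φ) x - (-c)⁻¹ * s : ℝ) : EReal) ≤ f x := by
  refine EReal.le_of_forall_le_coe fun t ht => EReal.coe_le_coe_iff.2 ?_
  have hsep := hsep x t ht
  rw [smul_apply, smul_eq_mul, ← mul_sub, inv_mul_le_iff₀ (by linarith)]
  linarith

lemma Gamma0.exists_affine_minorant {f : K → EReal} (hf : Gamma0 f) :
    ∃ (φ : K →L[ℝ] ℝ) (M : ℝ), ∀ x, ((φ x - M : ℝ) : EReal) ≤ f x := by
  obtain ⟨x₁, hx₁⟩ := hf.1.2
  obtain ⟨t₁, ht₁⟩ : ∃ t : ℝ, f x₁ = t := ⟨_, (EReal.coe_toReal hx₁ (hf.1.1 x₁)).symm⟩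
  obtain ⟨φ, c, s, -, hsep, hs⟩ :=
    hf.exists_epigraph_separation (r := t₁ - 1) (by rw [ht₁]; exact_mod_cast sub_one_lt t₁)
  have hc : c < 0 := by linarith [hsep x₁ t₁ ht₁.le]
  exact ⟨_, _, affine_minorant_of_epigraph_separation hc hsep⟩

lemma Gamma0.exists_affine_minorant_gt {f : K → EReal} (hf : Gamma0 f) {x₀ : K} {r : ℝ}
    (hr : (r : EReal) < f x₀) :
    ∃ (φ : K →L[ℝ] ℝ) (M : ℝ), (∀ x, ((φ x - M : ℝ) : EReal) ≤ f x) ∧ r < φ x₀ - M := by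
  obtain ⟨φ, c, s, hc, hsep, hs⟩ := hf.exists_epigraph_separation hr
  rcases hc.lt_or_eq with hc | rfl
  · refine ⟨_, _, affine_minorant_of_epigraph_separation hc hsep, ?_⟩
    rw [smul_apply, smul_eq_mul, ← mul_sub, lt_inv_mul_iff₀ (by linarith)]
    linarith
  -- A vertical separating hyperplane: tilt an arbitrary affine minorant along `φ`.
  obtain ⟨φ₀, M₀, hφ₀⟩ := hf.exists_affine_minorant
  simp only [zero_mul, add_zero] at hsep hs
  set n := max 0 ((r + 1 - (φ₀ x₀ - M₀)) / (φ x₀ - s))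
  have hn : r + 1 - (φ₀ x₀ - M₀) ≤ n * (φ x₀ - s) := by
    rw [← div_le_iff₀ (by linarith)]; exact le_max_right _ _
  refine ⟨φ₀ + n • φ, M₀ + n * s, fun x => EReal.le_of_forall_le_coe fun t ht => ?_, ?_⟩
  · have h₀ : φ₀ x - M₀ ≤ t := EReal.coe_le_coe_iff.1 ((hφ₀ x).trans ht)
    have h₁ : n * φ x ≤ n * s := mul_le_mul_of_nonneg_left (hsep x t ht).le (le_max_left _ _)
    simp only [add_apply, smul_apply, smul_eq_mul]
    exact EReal.coe_le_coe_iff.2 (by linarith)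
  · simp only [add_apply, smul_apply, smul_eq_mul]
    linarith

lemma fconj_le_of_affine_minorant {f : K → EReal} {w : K} {M : ℝ}
    (h : ∀ x, ((⟪x, w⟫ - M : ℝ) : EReal) ≤ f x) : fconj f w ≤ M :=
  iSup_le fun x => by
    simpa [EReal.coe_sub_coe_sub] using
      EReal.sub_le_sub (le_refl ((⟪x, w⟫ : ℝ) : EReal)) (h x)

lemma fconj_fconj_le (f : K → EReal) (x : K) : fconj (fconj f) x ≤ f x :=
  iSup_le fun u =>
    calc ((⟪u, x⟫ : ℝ) : EReal) - fconj f u ≤ ⟪u, x⟫ - (⟪x, u⟫ - f x) :=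
          EReal.sub_le_sub le_rfl (le_iSup (fun y => ((⟪y, u⟫ : ℝ) : EReal) - f y) x)
      _ = f x := by rw [real_inner_comm, EReal.coe_sub_coe_sub]

lemma Gamma0.le_fconj_fconj [CompleteSpace K] {f : K → EReal} (hf : Gamma0 f) (x₀ : K) :
    f x₀ ≤ fconj (fconj f) x₀ := by
  by_contra! hlt
  obtain ⟨r, hr, hrf⟩ := EReal.lt_iff_exists_real_btwn.1 hlt
  obtain ⟨φ, M, hφ, hφr⟩ := hf.exists_affine_minorant_gt hrf
  set w := (InnerProductSpace.toDual ℝ K).symm φ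
  have hw (x : K) : ⟪x, w⟫ = φ x := by
    rw [real_inner_comm, InnerProductSpace.toDual_symm_apply]
  have hconj : fconj f w ≤ M := fconj_le_of_affine_minorant fun x => hw x ▸ hφ x
  have : ((φ x₀ - M : ℝ) : EReal) ≤ fconj (fconj f) x₀ :=
    calc ((φ x₀ - M : ℝ) : EReal) ≤ ((⟪w, x₀⟫ : ℝ) : EReal) - fconj f w := by
          rw [real_inner_comm, hw, EReal.coe_sub]; exact EReal.sub_le_sub le_rfl hconj
      _ ≤ fconj (fconj f) x₀ := le_iSup (fun u => ((⟪u, x₀⟫ : ℝ) : EReal) - fconj f u) w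
  exact lt_irrefl _ ((EReal.coe_lt_coe_iff.2 hφr).trans (this.trans_lt hr))

theorem Gamma0.fconj_fconj [CompleteSpace K] {f : K → EReal} (hf : Gamma0 f) :
    fconj (fconj f) = f :=
  funext fun x => (fconj_fconj_le f x).antisymm (hf.le_fconj_fconj x)

lemma inner_sub_half_norm_sub_sq_le (u z x : K) :
    ⟪x, u⟫ - ‖x - z‖ ^ 2 / 2 ≤ ⟪z, u⟫ + ‖u‖ ^ 2 / 2 := by
  nlinarith [norm_sub_sq_real (x - z) u, (inner_sub_left x z u : ⟪x - z, u⟫ = _),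
    sq_nonneg ‖x - z - u‖]

lemma iSup_inner_sub_add_QK (f : K → EReal) (u z : K) :
    ⨆ x, ((⟪x, u⟫ : ℝ) : EReal) - (f z + QK (x - z)) = ((⟪z, u⟫ : ℝ) : EReal) - f z + QK u := by
  simp only [QK, EReal.coe_sub_add_coe]
  rw [← EReal.coe_add_sub]
  refine le_antisymm (iSup_le fun x => EReal.sub_le_sub
    (EReal.coe_le_coe_iff.2 (inner_sub_half_norm_sub_sq_le u z x)) le_rfl) ?_
  refine le_of_eq_of_le ?_ (le_iSup _ (z + u))
  simp only [add_sub_cancel_left, inner_add_left, real_inner_self_eq_norm_sq]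
  ring_nf

theorem fconj_menv (f : K → EReal) (u : K) : fconj (menv f) u = fconj f u + QK u := by
  simp only [fconj, menv, EReal.coe_sub_iInf]
  rw [iSup_comm]
  simp only [iSup_inner_sub_add_QK]
  simp only [QK, EReal.iSup_add_coe]

lemma menv_ne_top {X : Type*} [NormedAddCommGroup X] {f : X → EReal} (hf : ∃ x, f x ≠ ⊤)
    (y : X) : menv f y ≠ ⊤ := by
  obtain ⟨x, hx⟩ := hf
  exact ne_top_of_le_ne_top (EReal.add_lt_top hx (EReal.coe_ne_top _)).ne (iInf_le _ x)

lemma Gamma0.menv_ne_bot {f : K → EReal} (hf : Gamma0 f) (y : K) : menv f y ≠ ⊥ := by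
  obtain ⟨φ, M, hφ⟩ := hf.exists_affine_minorant
  refine ne_bot_of_le_ne_bot (EReal.coe_ne_bot (φ y - M - ‖φ‖ ^ 2 / 2)) (le_iInf fun z => ?_)
  have hφyz : φ y - φ z ≤ ‖φ‖ * ‖y - z‖ := by
    rw [← map_sub]; exact (Real.le_norm_self _).trans (φ.le_opNorm _)
  calc ((φ y - M - ‖φ‖ ^ 2 / 2 : ℝ) : EReal) ≤ ((φ z - M + ‖y - z‖ ^ 2 / 2 : ℝ) : EReal) :=
        EReal.coe_le_coe_iff.2 (by nlinarith [sq_nonneg (‖φ‖ - ‖y - z‖)])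
    _ ≤ f z + QK (y - z) := by rw [EReal.coe_add]; exact add_le_add (hφ z) le_rfl

section CompositeAverage

variable {ι : Type*} [Fintype ι] {E : ι → Type*} [∀ i, NormedAddCommGroup (E i)]
  [∀ i, InnerProductSpace ℝ (E i)] {L : ∀ i, H →L[ℝ] E i} {g : ∀ i, E i → EReal} {α : ι → ℝ}

def compositeAverage (L : ∀ i, H →L[ℝ] E i) (g : ∀ i, E i → EReal) (α : ι → ℝ) : H → EReal :=
  fun x => ∑ i, (α i : EReal) * g i (L i x)

lemma properFn_compositeAverage (hg : ∀ i, ProperFn (g i)) (hα : ∀ i, 0 ≤ α i)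
    (hL : ∀ y : ∀ i, E i, ∃ x, ∀ i, L i x = y i) : ProperFn (compositeAverage L g α) := by
  choose y hy using fun i => (hg i).2
  obtain ⟨x, hx⟩ := hL y
  refine ⟨fun x' => ?_, x, ?_⟩
  · exact Finset.sum_induction _ (· ≠ ⊥) (fun _ _ ha hb => EReal.add_ne_bot_iff.2 ⟨ha, hb⟩)
      EReal.zero_ne_bot fun i _ => EReal.coe_mul_ne_bot (hα i) ((hg i).1 _)
  · exact Finset.sum_induction _ (· ≠ ⊤) (fun _ _ ha hb => (EReal.add_lt_top ha hb).ne)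
      EReal.zero_ne_top fun i _ => EReal.coe_mul_ne_top (hα i) (hx i ▸ hy i)

lemma gamma0_compositeAverage (hg : ∀ i, Gamma0 (g i)) (hα : ∀ i, 0 ≤ α i)
    (hL : ∀ y : ∀ i, E i, ∃ x, ∀ i, L i x = y i) : Gamma0 (compositeAverage L g α) :=
  ⟨properFn_compositeAverage (fun i => (hg i).1) hα hL,
    LowerSemicontinuous.ereal_sum _ fun i _ =>
      ((hg i).2.1.comp (L i).continuous).ereal_const_mul (hα i),
    ConvexFnE.sum _ fun i _ => ((hg i).2.2.comp_continuousLinearMap (L i)).const_mul (hα i)⟩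

lemma compositeAverage_menv_le (hL : ∀ i, ‖L i‖ ≤ 1) (hα : ∀ i, 0 ≤ α i) (hαsum : ∑ i, α i = 1)
    (x : H) : compositeAverage L (fun i => menv (g i)) α x ≤ menv (compositeAverage L g α) x := by
  refine le_iInf fun z => ?_
  have hQ : ∑ i, α i * (‖L i x - L i z‖ ^ 2 / 2) ≤ ‖x - z‖ ^ 2 / 2 :=
    calc ∑ i, α i * (‖L i x - L i z‖ ^ 2 / 2) ≤ ∑ i, α i * (‖x - z‖ ^ 2 / 2) :=
          Finset.sum_le_sum fun i _ => mul_le_mul_of_nonneg_left (by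
            rw [← map_sub]; gcongr; simpa using (L i).le_of_opNorm_le (hL i) (x - z)) (hα i)
      _ = ‖x - z‖ ^ 2 / 2 := by rw [← Finset.sum_mul, hαsum, one_mul]
  calc compositeAverage L (fun i => menv (g i)) α x
      ≤ ∑ i, (α i : EReal) * (g i (L i z) + QK (L i x - L i z)) :=
        Finset.sum_le_sum fun i _ =>
          mul_le_mul_of_nonneg_left (iInf_le _ (L i z)) (EReal.coe_nonneg.2 (hα i))
    _ = compositeAverage L g α z + ((∑ i, α i * (‖L i x - L i z‖ ^ 2 / 2) : ℝ) : EReal) :=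
        EReal.sum_coe_mul_add_coe _ (fun i _ => hα i) _ _
    _ ≤ compositeAverage L g α z + QK (x - z) := add_le_add le_rfl (EReal.coe_le_coe_iff.2 hQ)

variable [CompleteSpace H] [∀ i, CompleteSpace (E i)]

-- `‖L* y‖² = ⟪L L* y, y⟫_𝒢 = ‖y‖²_𝒢`
lemma norm_sq_sum_smul_adjoint_of_coisometry
    (hLL : ∀ (y : ∀ i, E i) (j : ι),
      L j (∑ i, α i • (ContinuousLinearMap.adjoint (L i)) (y i)) = y j) (y : ∀ i, E i) :
    ‖∑ i, α i • (ContinuousLinearMap.adjoint (L i)) (y i)‖ ^ 2 = ∑ i, α i * ‖y i‖ ^ 2 := by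
  rw [← real_inner_self_eq_norm_sq, sum_inner]
  refine Finset.sum_congr rfl fun i _ => ?_
  rw [real_inner_smul_left, ContinuousLinearMap.adjoint_inner_left, hLL y i,
    real_inner_self_eq_norm_sq]

lemma menv_compositeAverage_le_of_coisometry (hg : ∀ i, Gamma0 (g i)) (hα : ∀ i, 0 ≤ α i)
    (hLL : ∀ (y : ∀ i, E i) (j : ι),
      L j (∑ i, α i • (ContinuousLinearMap.adjoint (L i)) (y i)) = y j) (x : H) :
    menv (compositeAverage L g α) x ≤ compositeAverage L (fun i => menv (g i)) α x := by
  refine EReal.le_sum_mul_iInf hα (fun i => (hg i).menv_ne_bot _)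
    (fun i => menv_ne_top (hg i).1.2 _) fun z => ?_
  set w := ∑ i, α i • (ContinuousLinearMap.adjoint (L i)) (z i - L i x)
  have hLw (i : ι) : L i (x + w) = z i := by rw [map_add, hLL]; abel
  have hQ : QK (x - (x + w)) = ((∑ i, α i * (‖L i x - z i‖ ^ 2 / 2) : ℝ) : EReal) := by
    rw [QK, sub_add_cancel_left, norm_neg, norm_sq_sum_smul_adjoint_of_coisometry hLL,
      Finset.sum_div]
    simp only [norm_sub_rev (z _), mul_div_assoc]
  calc menv (compositeAverage L g α) x ≤ compositeAverage L g α (x + w) + QK (x - (x + w)) :=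
        iInf_le _ _
    _ = ∑ i, (α i : EReal) * (g i (z i) + QK (L i x - z i)) := by
        rw [hQ]
        simp only [compositeAverage, hLw]
        exact (EReal.sum_coe_mul_add_coe _ (fun i _ => hα i) _ _).symm

end CompositeAverage

/-- `hLL` expresses `L ∘ L* = Id`, where `L* : (y_k)_k ↦ ∑_k α_k L_k* y_k` is the adjoint of
`L : x ↦ (L_k x)_k` for the weighted inner product `((y_k),(v_k)) ↦ ∑_k α_k ⟨y_k, v_k⟩`. -/
theorem comix_of_coisometry [CompleteSpace H] [∀ k, CompleteSpace (G k)]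
    (L : ∀ k, H →L[ℝ] G k) (g : ∀ k, (G k) → EReal) (α : Fin p → ℝ)
    (hg : ∀ k, Gamma0 (g k)) (hL : ∀ k, ‖L k‖ ≤ 1)
    (hα : ∀ k, α k ∈ Set.Ioc (0 : ℝ) 1) (hαsum : ∑ k, α k = 1)
    (hLL : ∀ (y : ∀ k, G k) (j : Fin p),
      L j (∑ k, α k • (ContinuousLinearMap.adjoint (L k)) (y k)) = y j) :
    comix L g α = fun x => ∑ k, (α k : EReal) * g k (L k x) := by
  have hα₀ : ∀ k, 0 ≤ α k := fun k => (hα k).1.le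
  have hψ : Gamma0 (compositeAverage L g α) :=
    gamma0_compositeAverage hg hα₀ fun y => ⟨_, hLL y⟩
  have hmenv : compositeAverage L (fun k => menv (g k)) α = menv (compositeAverage L g α) :=
    funext fun x => (compositeAverage_menv_le hL hα₀ hαsum x).antisymm
      (menv_compositeAverage_le_of_coisometry hg hα₀ hLL x)
  change fconj (fun u => fconj (compositeAverage L (fun k => menv (g k)) α) u - QK u) =
    compositeAverage L g α
  simp only [hmenv, fconj_menv, QK, EReal.add_sub_cancel_right]
  exact hψ.fconj_fconj

end
end

section
/- Douglas–Rachford algorithm for the comixture problem: let f ∈ Γ₀(H), set h = comix(L_k,g_k)_{1≤k≤p}, and suppose that 0 ∈ range(∂f + ∂h). Let (λ_n)_{n∈ℕ} be a sequence in (0,2) such that ∑_{n∈ℕ} λ_n(2−λ_n) = +∞, let y₀ ∈ H, and iterate for n = 0,1,…: x_n = y_n + ∑_{k=1}^p α_k L_k*(prox_{g_k}(L_k y_n) − L_k y_n); z_n = prox_f(2x_n − y_n); y_{n+1} = y_n + λ_n(z_n − x_n). Then (x_n)_{n∈ℕ} converges weakly to a minimizer of f + h over H. -/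
open scoped RealInnerProductSpace
open Filter

noncomputable section

variable {K : Type*} [NormedAddCommGroup K] [InnerProductSpace ℝ K]

variable {H : Type*} [NormedAddCommGroup H] [InnerProductSpace ℝ H]
  {p : ℕ} {G : Fin p → Type*} [∀ k, NormedAddCommGroup (G k)]
  [∀ k, InnerProductSpace ℝ (G k)]

/-!
Write `m = ∑ α_k (g_k □ Q) ∘ L_k` and `D w = ∑ α_k L_k* (L_k w - prox_{g_k} (L_k w))`. Each
Moreau envelope is convex with `1`-Lipschitz gradient `Id - prox_{g_k}`, and so is `m`, with
gradient `D`, because the `L_k` are contractions and the `α_k` are convex weights. Hence `m* - Q`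
is convex and the comixture `h = (m* - Q)*` satisfies `D w ∈ ∂h (w - D w)`: the first step of the
iteration is the resolvent `J_{∂h}` of `∂h`, while `prox_f` is the resolvent of `∂f`. The
iteration is thus the Douglas–Rachford algorithm for `∂f + ∂h`: `(y_n)` is a relaxed iteration of
a firmly nonexpansive map whose fixed points `ȳ` yield minimizers `J_{∂h} ȳ`, so by Opial's lemma
`y_n ⇀ ȳ` while `x_n - z_n → 0`. Finally, testing the monotonicity of `∂h` and `∂f` at a weak
cluster point `q` of `(x_n)` gives `q = J_{∂h} ȳ`.
-/

open Set Bornology Topology TopologicalSpace Function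

theorem le_of_forall_mem_Ioo_le_add_mul {a b c : ℝ} (h : ∀ t ∈ Ioo (0 : ℝ) 1, a ≤ b + t * c) :
    a ≤ b := by
  have hlim : Tendsto (fun t : ℝ => b + t * c) (𝓝[>] 0) (𝓝 b) := by
    refine (Continuous.tendsto' ?_ 0 b (by simp)).mono_left nhdsWithin_le_nhds
    fun_prop
  exact ge_of_tendsto hlim (eventually_of_mem (Ioo_mem_nhdsGT one_pos) h)

theorem tendsto_zero_of_antitone_of_sum_mul_le {E c : ℕ → ℝ} {B : ℝ} (hE : Antitone E)
    (hE₀ : ∀ n, 0 ≤ E n) (hc : ∀ n, 0 ≤ c n)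
    (hdiv : Tendsto (fun N => ∑ n ∈ Finset.range N, c n) atTop atTop)
    (hB : ∀ N, ∑ n ∈ Finset.range N, c n * E n ≤ B) : Tendsto E atTop (𝓝 0) := by
  have hle : ∀ᶠ N in atTop, E N ≤ B / ∑ n ∈ Finset.range N, c n := by
    filter_upwards [hdiv.eventually_gt_atTop 0] with N hN
    rw [le_div_iff₀ hN, Finset.mul_sum]
    refine (Finset.sum_le_sum fun n hn => ?_).trans (hB N)
    rw [mul_comm]
    exact mul_le_mul_of_nonneg_left (hE (Finset.mem_range.1 hn).le) (hc n)
  exact squeeze_zero' (Eventually.of_forall hE₀) hle (tendsto_const_nhds.div_atTop hdiv)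

section WeakConvergence

def WeakTendsto (x : ℕ → H) (a : H) : Prop :=
  ∀ u : H, Tendsto (fun n => ⟪x n, u⟫) atTop (𝓝 ⟪a, u⟫)

theorem WeakTendsto.comp {x : ℕ → H} {a : H} (hx : WeakTendsto x a) {φ : ℕ → ℕ}
    (hφ : Tendsto φ atTop atTop) : WeakTendsto (x ∘ φ) a :=
  fun u => (hx u).comp hφ

variable [CompleteSpace H]

/-- Sequential Banach–Alaoglu, applied in the closed span of the sequence, which is separable. -/
theorem exists_weakTendsto_subseq {y : ℕ → H} (hy : IsBounded (range y)) :
    ∃ φ : ℕ → ℕ, StrictMono φ ∧ ∃ a, WeakTendsto (y ∘ φ) a := by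
  obtain ⟨C, hC⟩ := isBounded_iff_forall_norm_le.1 hy
  set V := (Submodule.span ℝ (range y)).topologicalClosure
  have hyV (n : ℕ) : y n ∈ V :=
    Submodule.le_topologicalClosure _ (Submodule.subset_span (mem_range_self n))
  have : SeparableSpace V := by
    have : IsSeparable (V : Set H) := by
      rw [Submodule.topologicalClosure_coe]
      exact (countable_range y).isSeparable.span.closure
    exact this.separableSpace
  let ψ (n : ℕ) : WeakDual ℝ V := StrongDual.toWeakDual (innerSL ℝ (⟨y n, hyV n⟩ : V))
  have hψ (n : ℕ) : ψ n ∈ WeakDual.toStrongDual ⁻¹' Metric.closedBall 0 C := by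
    refine (dist_zero_right (WeakDual.toStrongDual (ψ n))).trans_le ?_
    simpa [ψ] using hC _ (mem_range_self n)
  obtain ⟨ℓ, -, φ, hφ, hlim⟩ := WeakDual.isSeqCompact_closedBall ℝ V 0 C hψ
  refine ⟨φ, hφ, ((InnerProductSpace.toDual ℝ V).symm (WeakDual.toStrongDual ℓ) : H), fun u => ?_⟩
  have hproj (v : V) : ⟪(v : H), u⟫ = ⟪v, V.orthogonalProjectionOnto u⟫ :=
    (Submodule.inner_orthogonalProjectionOnto_eq_of_mem_left v u).symm
  simp only [Function.comp_apply, hproj ⟨y _, hyV _⟩, hproj, InnerProductSpace.toDual_symm_apply]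
  exact ((WeakDual.eval_continuous _).tendsto ℓ).comp hlim

theorem weakTendsto_of_forall_subseq {x : ℕ → H} {a : H} (hx : IsBounded (range x))
    (h : ∀ φ : ℕ → ℕ, Tendsto φ atTop atTop → ∀ q, WeakTendsto (x ∘ φ) q → q = a) :
    WeakTendsto x a := by
  intro u
  refine tendsto_of_subseq_tendsto fun ψ hψ => ?_
  obtain ⟨φ, hφ, q, hq⟩ := exists_weakTendsto_subseq (hx.subset (range_comp_subset_range ψ x))
  obtain rfl := h (ψ ∘ φ) (hψ.comp hφ.tendsto_atTop) q hq
  exact ⟨φ, hq u⟩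

/-- Opial's lemma. -/
theorem exists_weakTendsto_of_tendsto_norm_sub {y : ℕ → H} {S : Set H}
    (hy : IsBounded (range y))
    (hdist : ∀ w ∈ S, ∃ r, Tendsto (fun n => ‖y n - w‖) atTop (𝓝 r))
    (hS : ∀ φ : ℕ → ℕ, Tendsto φ atTop atTop → ∀ q, WeakTendsto (y ∘ φ) q → q ∈ S) :
    ∃ a ∈ S, WeakTendsto y a := by
  obtain ⟨φ, hφ, a, ha⟩ := exists_weakTendsto_subseq hy
  have haS := hS φ hφ.tendsto_atTop a ha
  refine ⟨a, haS, weakTendsto_of_forall_subseq hy fun ψ hψ q hq => ?_⟩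
  obtain ⟨r, hr⟩ := hdist a haS
  obtain ⟨s, hs⟩ := hdist q (hS ψ hψ q hq)
  -- `⟪y n, q - a⟫` is a combination of `‖y n - a‖ ^ 2` and `‖y n - q‖ ^ 2`, hence converges
  have hlim : Tendsto (fun n => ⟪y n, q - a⟫) atTop
      (𝓝 ((r ^ 2 - s ^ 2 + (‖q‖ ^ 2 - ‖a‖ ^ 2)) / 2)) := by
    refine ((((hr.pow 2).sub (hs.pow 2)).add_const (‖q‖ ^ 2 - ‖a‖ ^ 2)).div_const 2).congr
      fun n => ?_
    rw [norm_sub_sq_real, norm_sub_sq_real, inner_sub_right]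
    ring
  have hq' := tendsto_nhds_unique (hq (q - a)) (hlim.comp hψ)
  have ha' := tendsto_nhds_unique (ha (q - a)) (hlim.comp hφ.tendsto_atTop)
  have : ⟪q - a, q - a⟫ = 0 := by rw [inner_sub_left, hq', ha', sub_self]
  exact sub_eq_zero.1 (inner_self_eq_zero.1 this)

end WeakConvergence

section FirmlyNonexpansive

def FirmlyNonexpansive (T : H → H) : Prop :=
  ∀ a b, ‖T a - T b‖ ^ 2 ≤ ⟪T a - T b, a - b⟫

variable {T : H → H}

theorem firmlyNonexpansive_iff_lipschitzWith_reflection :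
    FirmlyNonexpansive T ↔ LipschitzWith 1 fun a => (2 : ℝ) • T a - a := by
  rw [lipschitzWith_iff_norm_sub_le]
  refine forall₂_congr fun a b => ?_
  have hexp : ‖((2 : ℝ) • T a - a) - ((2 : ℝ) • T b - b)‖ ^ 2
      = 4 * ‖T a - T b‖ ^ 2 - 4 * ⟪T a - T b, a - b⟫ + ‖a - b‖ ^ 2 := by
    rw [show ((2 : ℝ) • T a - a) - ((2 : ℝ) • T b - b) = (2 : ℝ) • (T a - T b) - (a - b) by
      module, norm_sub_sq_real, norm_smul, real_inner_smul_left, Real.norm_two]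
    ring
  rw [NNReal.coe_one, one_mul, ← sq_le_sq₀ (norm_nonneg _) (norm_nonneg _), hexp]
  constructor <;> intro h <;> linarith

theorem FirmlyNonexpansive.lipschitzWith (hT : FirmlyNonexpansive T) : LipschitzWith 1 T := by
  refine lipschitzWith_iff_norm_sub_le.2 fun a b => ?_
  have := (hT a b).trans (real_inner_le_norm _ _)
  rw [NNReal.coe_one, one_mul]
  nlinarith [norm_nonneg (T a - T b), norm_nonneg (a - b)]

theorem FirmlyNonexpansive.norm_relax_sub_sq_le (hT : FirmlyNonexpansive T) {w : H}
    (hw : IsFixedPt T w) (y : H) {μ : ℝ} (hμ : 0 ≤ μ) :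
    ‖y + μ • (T y - y) - w‖ ^ 2 ≤ ‖y - w‖ ^ 2 - μ * (2 - μ) * ‖T y - y‖ ^ 2 := by
  have hfirm : ⟪y - w, T y - y⟫ ≤ -‖T y - y‖ ^ 2 := by
    have := hT y w
    rw [hw.eq, show T y - w = (T y - y) + (y - w) by abel, norm_add_sq_real, inner_add_left,
      real_inner_self_eq_norm_sq] at this
    linarith [real_inner_comm (T y - y) (y - w)]
  rw [show y + μ • (T y - y) - w = (y - w) + μ • (T y - y) by abel, norm_add_sq_real,
    real_inner_smul_right, norm_smul, Real.norm_of_nonneg hμ]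
  nlinarith

theorem FirmlyNonexpansive.norm_relax_residual_le (hT : FirmlyNonexpansive T) (y : H) {μ : ℝ}
    (hμ₀ : 0 ≤ μ) (hμ₂ : μ ≤ 2) :
    ‖T (y + μ • (T y - y)) - (y + μ • (T y - y))‖ ≤ ‖T y - y‖ := by
  set y' := y + μ • (T y - y) with hy'
  have hR := (firmlyNonexpansive_iff_lipschitzWith_reflection.1 hT).norm_sub_le y' y
  rw [NNReal.coe_one, one_mul, hy', show y + μ • (T y - y) - y = μ • (T y - y) by abel,
    norm_smul, Real.norm_of_nonneg hμ₀, ← hy'] at hR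
  have hsplit : (2 : ℝ) • (T y' - y') =
      ((2 : ℝ) • T y' - y') - ((2 : ℝ) • T y - y) + (2 - μ) • (T y - y) := by
    rw [hy']; module
  have h2 : ‖(2 : ℝ) • (T y' - y')‖ ≤ μ * ‖T y - y‖ + (2 - μ) * ‖T y - y‖ := by
    rw [hsplit]
    refine (norm_add_le _ _).trans (add_le_add hR ?_)
    rw [norm_smul, Real.norm_of_nonneg (by linarith)]
  rw [norm_smul, Real.norm_two] at h2
  linarith

section Relaxation

variable {w : H} {lam : ℕ → ℝ} {y : ℕ → H}

theorem FirmlyNonexpansive.norm_sub_sq_add_sum_le (hT : FirmlyNonexpansive T)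
    (hw : IsFixedPt T w) (hlam : ∀ n, 0 ≤ lam n)
    (hy : ∀ n, y (n + 1) = y n + lam n • (T (y n) - y n)) (N : ℕ) :
    ‖y N - w‖ ^ 2 + ∑ n ∈ Finset.range N, lam n * (2 - lam n) * ‖T (y n) - y n‖ ^ 2
      ≤ ‖y 0 - w‖ ^ 2 := by
  induction N with
  | zero => simp
  | succ N ih =>
    have := hT.norm_relax_sub_sq_le hw (y N) (hlam N)
    rw [← hy] at this
    rw [Finset.sum_range_succ]
    linarith

theorem FirmlyNonexpansive.antitone_norm_sub (hT : FirmlyNonexpansive T) (hw : IsFixedPt T w)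
    (hlam : ∀ n, lam n ∈ Icc (0 : ℝ) 2) (hy : ∀ n, y (n + 1) = y n + lam n • (T (y n) - y n)) :
    Antitone fun n => ‖y n - w‖ := by
  refine antitone_nat_of_succ_le fun n => ?_
  have := hT.norm_relax_sub_sq_le hw (y n) (hlam n).1
  rw [← hy] at this
  have : 0 ≤ lam n * (2 - lam n) * ‖T (y n) - y n‖ ^ 2 :=
    mul_nonneg (mul_nonneg (hlam n).1 (by linarith [(hlam n).2])) (sq_nonneg _)
  exact le_of_sq_le_sq (by linarith) (norm_nonneg _)

theorem FirmlyNonexpansive.tendsto_residual_zero (hT : FirmlyNonexpansive T)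
    (hw : IsFixedPt T w) (hlam : ∀ n, lam n ∈ Icc (0 : ℝ) 2)
    (hdiv : Tendsto (fun N => ∑ n ∈ Finset.range N, lam n * (2 - lam n)) atTop atTop)
    (hy : ∀ n, y (n + 1) = y n + lam n • (T (y n) - y n)) :
    Tendsto (fun n => ‖T (y n) - y n‖) atTop (𝓝 0) := by
  have hanti : Antitone fun n => ‖T (y n) - y n‖ := antitone_nat_of_succ_le fun n => by
    simpa only [hy] using hT.norm_relax_residual_le (y n) (hlam n).1 (hlam n).2
  have hsq := tendsto_zero_of_antitone_of_sum_mul_le (E := fun n => ‖T (y n) - y n‖ ^ 2)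
    (B := ‖y 0 - w‖ ^ 2)
    (fun m n hmn => pow_le_pow_left₀ (norm_nonneg _) (hanti hmn) 2) (fun n => sq_nonneg _)
    (fun n => mul_nonneg (hlam n).1 (by linarith [(hlam n).2])) hdiv
    fun N => by
      have := hT.norm_sub_sq_add_sum_le hw (fun n => (hlam n).1) hy N
      linarith [sq_nonneg ‖y N - w‖]
  simpa [Function.comp_def, Real.sqrt_sq (norm_nonneg _)] using
    (Real.continuous_sqrt.tendsto 0).comp hsq

theorem FirmlyNonexpansive.isBounded_range (hT : FirmlyNonexpansive T) (hw : IsFixedPt T w)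
    (hlam : ∀ n, lam n ∈ Icc (0 : ℝ) 2) (hy : ∀ n, y (n + 1) = y n + lam n • (T (y n) - y n)) :
    IsBounded (range y) :=
  Metric.isBounded_closedBall.subset <| range_subset_iff.2 fun n => by
    rw [Metric.mem_closedBall, dist_eq_norm]
    exact hT.antitone_norm_sub hw hlam hy (Nat.zero_le n)

end Relaxation

/-- The demiclosedness principle. -/
theorem LipschitzWith.isFixedPt_of_weakTendsto {T : H → H} (hT : LipschitzWith 1 T)
    {w : ℕ → H} {q : H} (hw : IsBounded (range w)) (hwq : WeakTendsto w q)
    (hres : Tendsto (fun n => ‖T (w n) - w n‖) atTop (𝓝 0)) : IsFixedPt T q := by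
  obtain ⟨C, hC⟩ := isBounded_iff_forall_norm_le.1 hw
  set D := C + ‖q‖
  have hD (n : ℕ) : ‖w n - q‖ ≤ D :=
    (_root_.norm_sub_le _ _).trans (by linarith [hC _ (mem_range_self n)])
  set e := q - T q with he
  have key (n : ℕ) : ‖e‖ ^ 2
      ≤ ‖T (w n) - w n‖ ^ 2 + 2 * ‖T (w n) - w n‖ * D - 2 * (⟪w n, e⟫ - ⟪q, e⟫) := by
    have htri : ‖w n - T q‖ ≤ ‖T (w n) - w n‖ + ‖w n - q‖ := by
      have := hT.norm_sub_le (w n) q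
      rw [NNReal.coe_one, one_mul] at this
      calc ‖w n - T q‖ ≤ ‖w n - T (w n)‖ + ‖T (w n) - T q‖ :=
            norm_sub_le_norm_sub_add_norm_sub _ _ _
        _ ≤ ‖T (w n) - w n‖ + ‖w n - q‖ := by rw [norm_sub_rev]; linarith
    have hexp : ‖w n - T q‖ ^ 2 = ‖w n - q‖ ^ 2 + 2 * (⟪w n, e⟫ - ⟪q, e⟫) + ‖e‖ ^ 2 := by
      rw [show w n - T q = (w n - q) + e by rw [he, sub_add_sub_cancel], norm_add_sq_real,
        inner_sub_left]
    have := pow_le_pow_left₀ (norm_nonneg _) htri 2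
    nlinarith [hD n, norm_nonneg (T (w n) - w n)]
  have hlim : Tendsto (fun n => ‖T (w n) - w n‖ ^ 2 + 2 * ‖T (w n) - w n‖ * D
      - 2 * (⟪w n, e⟫ - ⟪q, e⟫)) atTop (𝓝 0) := by
    simpa using ((hres.pow 2).add ((hres.const_mul 2).mul_const D)).sub
      (((hwq e).sub_const ⟪q, e⟫).const_mul 2)
  have : ‖e‖ ^ 2 ≤ 0 := ge_of_tendsto' hlim key
  exact (sub_eq_zero.1 (norm_eq_zero.1 (by nlinarith [norm_nonneg e]))).symm

theorem FirmlyNonexpansive.exists_weakTendsto_of_relaxed [CompleteSpace H]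
    (hT : FirmlyNonexpansive T) (hfix : ∃ w, IsFixedPt T w) {lam : ℕ → ℝ}
    (hlam : ∀ n, lam n ∈ Icc (0 : ℝ) 2)
    (hdiv : Tendsto (fun N => ∑ n ∈ Finset.range N, lam n * (2 - lam n)) atTop atTop)
    {y : ℕ → H} (hy : ∀ n, y (n + 1) = y n + lam n • (T (y n) - y n)) :
    ∃ a, IsFixedPt T a ∧ WeakTendsto y a ∧ Tendsto (fun n => ‖T (y n) - y n‖) atTop (𝓝 0) := by
  obtain ⟨w, hw⟩ := hfix
  have hbdd := hT.isBounded_range hw hlam hy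
  have hres := hT.tendsto_residual_zero hw hlam hdiv hy
  obtain ⟨a, ha, hya⟩ := exists_weakTendsto_of_tendsto_norm_sub (S := fixedPoints T) hbdd
    (fun v hv => ⟨_, tendsto_atTop_ciInf (hT.antitone_norm_sub hv hlam hy)
      ⟨0, forall_mem_range.2 fun _ => norm_nonneg _⟩⟩)
    fun φ hφ q hq => hT.lipschitzWith.isFixedPt_of_weakTendsto
      (hbdd.subset (range_comp_subset_range φ y)) hq (hres.comp hφ)
  exact ⟨a, ha, hya, hres⟩

end FirmlyNonexpansive

section Subdifferential

variable {g : K → EReal}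

theorem ProperFn.exists_eq_coe_of_mem_subdiff (hg : ProperFn g) {x u : K}
    (hu : u ∈ subdiff g x) : ∃ r : ℝ, g x = r := by
  obtain ⟨hbot, z, hz⟩ := hg
  have htop : g x ≠ ⊤ := fun htop => hz (by simpa [htop] using hu z)
  lift g x to ℝ using ⟨htop, hbot x⟩ with r
  exact ⟨r, rfl⟩

theorem ProperFn.inner_sub_nonneg_of_mem_subdiff (hg : ProperFn g) {x₁ x₂ u₁ u₂ : K}
    (h₁ : u₁ ∈ subdiff g x₁) (h₂ : u₂ ∈ subdiff g x₂) : 0 ≤ ⟪x₁ - x₂, u₁ - u₂⟫ := by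
  obtain ⟨r₁, hr₁⟩ := hg.exists_eq_coe_of_mem_subdiff h₁
  obtain ⟨r₂, hr₂⟩ := hg.exists_eq_coe_of_mem_subdiff h₂
  have e₁ := h₁ x₂
  have e₂ := h₂ x₁
  rw [hr₁, hr₂, ← EReal.coe_add, EReal.coe_le_coe_iff] at e₁ e₂
  have : ⟪x₁ - x₂, u₁⟫ = -⟪x₂ - x₁, u₁⟫ := by rw [← inner_neg_left, neg_sub]
  rw [inner_sub_right]
  linarith

theorem le_add_of_mem_subdiff_of_add_eq_zero {f h : K → EReal} {x u v : K} (hu : u ∈ subdiff f x)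
    (hv : v ∈ subdiff h x) (huv : u + v = 0) (w : K) : f x + h x ≤ f w + h w := by
  have := add_le_add (hu w) (hv w)
  rwa [add_add_add_comm, ← EReal.coe_add, ← inner_add_right, huv, inner_zero_right,
    EReal.coe_zero, zero_add] at this

/-- `T` is a selection of the resolvent `(Id + ∂g)⁻¹`. -/
def IsSubdiffResolvent (g : K → EReal) (T : K → K) : Prop :=
  ∀ w, w - T w ∈ subdiff g (T w)

variable {T : K → K}

theorem IsSubdiffResolvent.firmlyNonexpansive (hT : IsSubdiffResolvent g T) (hg : ProperFn g) :
    FirmlyNonexpansive T := fun a b => by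
  have := hg.inner_sub_nonneg_of_mem_subdiff (hT a) (hT b)
  rw [show a - T a - (b - T b) = (a - b) - (T a - T b) by abel, inner_sub_right,
    real_inner_self_eq_norm_sq] at this
  linarith

theorem IsSubdiffResolvent.apply_add_eq (hT : IsSubdiffResolvent g T) (hg : ProperFn g)
    {x v : K} (hv : v ∈ subdiff g x) : T (x + v) = x := by
  have := hg.inner_sub_nonneg_of_mem_subdiff hv (hT (x + v))
  rw [show v - (x + v - T (x + v)) = -(x - T (x + v)) by abel, inner_neg_right,
    real_inner_self_eq_norm_sq, neg_nonneg] at this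
  exact (sub_eq_zero.1 (norm_eq_zero.1 (by nlinarith [norm_nonneg (x - T (x + v))]))).symm

end Subdifferential

section ProxValue

variable {E : Type*} [NormedAddCommGroup E] {g : E → EReal} {P : E → E}

theorem IsProx.exists_eq_coe (hP : IsProx g P) (hg : ProperFn g) (x : E) :
    ∃ r : ℝ, g (P x) = r := by
  obtain ⟨hbot, z, hz⟩ := hg
  have htop : g (P x) ≠ ⊤ := by
    intro htop
    have := (hP x).1 z
    lift g z to ℝ using ⟨hz, hbot z⟩ with r
    rw [htop, QK, EReal.top_add_coe, top_le_iff, QK, ← EReal.coe_add] at this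
    exact EReal.coe_ne_top _ this
  lift g (P x) to ℝ using ⟨htop, hbot _⟩ with r
  exact ⟨r, rfl⟩

def menvReal (g : E → EReal) (P : E → E) (x : E) : ℝ :=
  (g (P x)).toReal + ‖x - P x‖ ^ 2 / 2

theorem IsProx.menv_eq (hP : IsProx g P) (hg : ProperFn g) (x : E) :
    menv g x = menvReal g P x := by
  obtain ⟨r, hr⟩ := hP.exists_eq_coe hg x
  have hval : g (P x) + QK (x - P x) = menvReal g P x := by
    rw [menvReal, hr, EReal.toReal_coe, QK, ← EReal.coe_add]
  exact hval ▸ le_antisymm (iInf_le _ (P x)) (le_iInf (hP x).1)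

end ProxValue

section Prox

variable {g : K → EReal} {P : K → K}

theorem IsProx.isSubdiffResolvent (hP : IsProx g P) (hg : ProperFn g) (hconv : ConvexFnE g) :
    IsSubdiffResolvent g P := fun x z => by
  obtain ⟨r₀, hr₀⟩ := hP.exists_eq_coe hg x
  rcases eq_or_ne (g z) ⊤ with hz | hz
  · simp [hz]
  lift g z to ℝ using ⟨hz, hg.1 z⟩ with r hr
  rw [hr₀, ← EReal.coe_add, EReal.coe_le_coe_iff]
  set d := z - P x
  -- compare `P x` with the points `P x + t • d` of the segment towards `z`, and let `t → 0`
  refine le_of_forall_mem_Ioo_le_add_mul (c := ‖d‖ ^ 2 / 2) fun t ht => ?_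
  have hseg : (1 - t) • P x + t • z = P x + t • d := by simp only [d]; module
  have hw : g (P x + t • d) ≤ ((1 - t) * r₀ + t * r : ℝ) := by
    have := hconv (P x) z (1 - t) t (by linarith [ht.2]) ht.1.le (by ring)
    rwa [hseg, hr₀, ← hr, ← EReal.coe_mul, ← EReal.coe_mul, ← EReal.coe_add] at this
  have hmin := (hP x).1 (P x + t • d)
  lift g (P x + t • d) to ℝ using ⟨ne_top_of_le_ne_top (EReal.coe_ne_top _) hw, hg.1 _⟩ with s
  rw [hr₀, QK, QK, ← EReal.coe_add, ← EReal.coe_add, EReal.coe_le_coe_iff,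
    show x - (P x + t • d) = (x - P x) - t • d by abel, norm_sub_sq_real (x - P x),
    real_inner_smul_right, norm_smul, Real.norm_of_nonneg ht.1.le] at hmin
  rw [EReal.coe_le_coe_iff] at hw
  nlinarith [ht.1, real_inner_comm d (x - P x)]

end Prox

section Conjugate

variable {φ : K → EReal} {v z : K} {c : ℝ}

theorem coe_sub_le_fconj (hc : φ v = c) (z : K) : ((⟪v, z⟫ - c : ℝ) : EReal) ≤ fconj φ z := by
  rw [EReal.coe_sub, ← hc]
  exact le_iSup (fun x => ((⟪x, z⟫ : ℝ) : EReal) - φ x) v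

/-- The Fenchel–Young equality. -/
theorem fconj_eq_of_mem_subdiff (hc : φ v = c) (hz : z ∈ subdiff φ v) :
    fconj φ z = ((⟪v, z⟫ - c : ℝ) : EReal) := by
  refine le_antisymm (iSup_le fun x => ?_) (coe_sub_le_fconj hc z)
  rw [EReal.sub_le_iff_le_add (.inr (EReal.coe_ne_top _)) (.inr (EReal.coe_ne_bot _))]
  calc ((⟪x, z⟫ : ℝ) : EReal) = ((⟪v, z⟫ - c : ℝ) : EReal) + (((⟪x - v, z⟫ : ℝ) : EReal) + c) := by
        rw [← EReal.coe_add, ← EReal.coe_add, inner_sub_left]; ring_nf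
    _ ≤ ((⟪v, z⟫ - c : ℝ) : EReal) + φ x := add_le_add_right (hc ▸ hz x) _

theorem mem_subdiff_fconj (hc : φ v = c) (hz : z ∈ subdiff φ v) : v ∈ subdiff (fconj φ) z :=
  fun z' => by
    rw [fconj_eq_of_mem_subdiff hc hz, ← EReal.coe_add]
    refine le_trans (le_of_eq ?_) (coe_sub_le_fconj hc z')
    rw [inner_sub_left, real_inner_comm v z, real_inner_comm v z']
    ring_nf

end Conjugate

def fconjSubQKConj (M : K → EReal) : K → EReal :=
  fconj fun u => fconj M u - QK u

/-- Convexity of `m` together with `1`-smoothness with gradient `D`, as two quadratic bounds. -/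
def ConvexOneSmooth (m : K → ℝ) (D : K → K) : Prop :=
  ∀ w x, m w + ⟪x - w, D w⟫ ≤ m x ∧ m x ≤ m w + ⟪x - w, D w⟫ + ‖x - w‖ ^ 2 / 2

namespace ConvexOneSmooth

theorem comp_clm {E : Type*} [NormedAddCommGroup E] [InnerProductSpace ℝ E] [CompleteSpace E]
    [CompleteSpace K] {m : K → ℝ} {D : K → K} (hm : ConvexOneSmooth m D) (L : E →L[ℝ] K)
    (hL : ‖L‖ ≤ 1) :
    ConvexOneSmooth (fun x => m (L x)) fun w => ContinuousLinearMap.adjoint L (D (L w)) :=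
  fun w x => by
    have hLx : ‖L x - L w‖ ≤ ‖x - w‖ := by
      simpa [map_sub] using L.le_of_opNorm_le hL (x - w)
    rw [ContinuousLinearMap.adjoint_inner_right, map_sub]
    exact ⟨(hm (L w) (L x)).1, (hm (L w) (L x)).2.trans (by gcongr)⟩

theorem sum {ι : Type*} [Fintype ι] {m : ι → K → ℝ} {D : ι → K → K}
    (hm : ∀ i, ConvexOneSmooth (m i) (D i)) {α : ι → ℝ} (hα : ∀ i, 0 ≤ α i)
    (hα₁ : ∑ i, α i = 1) :
    ConvexOneSmooth (fun x => ∑ i, α i * m i x) fun w => ∑ i, α i • D i w := fun w x => by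
  have hinner : ⟪x - w, ∑ i, α i • D i w⟫ = ∑ i, α i * ⟪x - w, D i w⟫ := by
    simp only [inner_sum, real_inner_smul_right]
  have hquad : ‖x - w‖ ^ 2 / 2 = ∑ i, α i * (‖x - w‖ ^ 2 / 2) := by
    rw [← Finset.sum_mul, hα₁, one_mul]
  rw [hinner, hquad, ← Finset.sum_add_distrib, ← Finset.sum_add_distrib]
  constructor <;> refine Finset.sum_le_sum fun i _ => ?_ <;> simp only [← mul_add] <;>
    exact mul_le_mul_of_nonneg_left (by linarith [hm i w x]) (hα i)

section

variable {m : K → ℝ} {D : K → K}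

theorem grad_mem_subdiff (hm : ConvexOneSmooth m D) (w : K) :
    D w ∈ subdiff (fun x => (m x : EReal)) w := fun x => by
  rw [← EReal.coe_add, EReal.coe_le_coe_iff, add_comm]
  exact (hm w x).1

theorem fconj_sub_QK_grad (hm : ConvexOneSmooth m D) (w : K) :
    fconj (fun x => (m x : EReal)) (D w) - QK (D w)
      = ((⟪w, D w⟫ - m w - ‖D w‖ ^ 2 / 2 : ℝ) : EReal) := by
  rw [fconj_eq_of_mem_subdiff (φ := fun x => (m x : EReal)) rfl (hm.grad_mem_subdiff w), QK,
    ← EReal.coe_sub]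

theorem sub_grad_mem_subdiff (hm : ConvexOneSmooth m D) (w : K) :
    w - D w ∈ subdiff (fun u => fconj (fun x => (m x : EReal)) u - QK u) (D w) := fun u => by
  dsimp only
  rw [hm.fconj_sub_QK_grad, ← EReal.coe_add]
  -- the upper quadratic bound on `m` at `w + (u - D w)` is a lower bound on `m* u`
  refine le_trans ?_ (EReal.sub_le_sub (coe_sub_le_fconj (v := w + (u - D w)) rfl u) le_rfl)
  rw [QK, ← EReal.coe_sub, EReal.coe_le_coe_iff]
  obtain ⟨d, rfl⟩ : ∃ d, u = D w + d := ⟨u - D w, by abel⟩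
  have := (hm w (w + d)).2
  rw [add_sub_cancel_left] at this ⊢
  rw [norm_add_sq_real, inner_sub_right, inner_add_left, inner_add_right, inner_add_right,
    real_inner_self_eq_norm_sq]
  linarith [real_inner_comm w d, real_inner_comm (D w) d]

theorem isSubdiffResolvent (hm : ConvexOneSmooth m D) :
    IsSubdiffResolvent (fconjSubQKConj fun x => (m x : EReal)) fun w => w - D w := fun w => by
  rw [sub_sub_cancel]
  exact mem_subdiff_fconj (hm.fconj_sub_QK_grad w) (hm.sub_grad_mem_subdiff w)

theorem properFn_fconjSubQKConj (hm : ConvexOneSmooth m D) :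
    ProperFn (fconjSubQKConj fun x => (m x : EReal)) := by
  set φ := fun u => fconj (fun x => (m x : EReal)) u - QK u
  have hc : φ (D 0) = _ := hm.fconj_sub_QK_grad 0
  refine ⟨fun z => ne_bot_of_le_ne_bot (EReal.coe_ne_bot _) (coe_sub_le_fconj hc z), 0 - D 0, ?_⟩
  rw [fconjSubQKConj, fconj_eq_of_mem_subdiff hc (hm.sub_grad_mem_subdiff 0)]
  exact EReal.coe_ne_top _

end

end ConvexOneSmooth

theorem IsProx.convexOneSmooth_menvReal {g : K → EReal} {P : K → K} (hP : IsProx g P)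
    (hg : ProperFn g) (hconv : ConvexFnE g) : ConvexOneSmooth (menvReal g P) fun x => x - P x :=
    fun w x => by
  obtain ⟨r, hr⟩ := hP.exists_eq_coe hg w
  obtain ⟨s, hs⟩ := hP.exists_eq_coe hg x
  have hsub := hP.isSubdiffResolvent hg hconv w (P x)
  have hmin := (hP x).1 (P w)
  rw [hr, hs, ← EReal.coe_add, EReal.coe_le_coe_iff] at hsub
  rw [hr, hs, QK, QK, ← EReal.coe_add, ← EReal.coe_add, EReal.coe_le_coe_iff,
    show x - P w = (x - w) + (w - P w) by abel, norm_add_sq_real] at hmin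
  simp only [menvReal, hr, hs, EReal.toReal_coe]
  refine ⟨?_, by linarith⟩
  have hinner : ⟪x - w, w - P w⟫ = ⟪P x - P w, w - P w⟫ + ⟪(x - P x) - (w - P w), w - P w⟫ := by
    rw [← inner_add_left]; congr 1; abel
  have hnorm : ‖x - P x‖ ^ 2
      = ‖(x - P x) - (w - P w)‖ ^ 2 + 2 * ⟪(x - P x) - (w - P w), w - P w⟫ + ‖w - P w‖ ^ 2 := by
    rw [← norm_add_sq_real, sub_add_cancel]
  nlinarith [sq_nonneg ‖(x - P x) - (w - P w)‖]

theorem comix_eq_fconjSubQKConj {L : ∀ k, H →L[ℝ] G k} {g : ∀ k, G k → EReal} {α : Fin p → ℝ}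
    {P : ∀ k, G k → G k} (hg : ∀ k, ProperFn (g k)) (hP : ∀ k, IsProx (g k) (P k)) :
    comix L g α
      = fconjSubQKConj fun x => ((∑ k, α k * menvReal (g k) (P k) (L k x) : ℝ) : EReal) := by
  refine congrArg fconjSubQKConj (funext fun x => ?_)
  have hcoe : ((∑ k, α k * menvReal (g k) (P k) (L k x) : ℝ) : EReal)
      = ∑ k, ((α k * menvReal (g k) (P k) (L k x) : ℝ) : EReal) :=
    map_sum (⟨⟨Real.toEReal, EReal.coe_zero⟩, EReal.coe_add⟩ : ℝ →+ EReal) _ _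
  simp [hcoe, (hP _).menv_eq (hg _), EReal.coe_mul]

section DouglasRachford

def douglasRachfordOp (A B : H → H) (y : H) : H :=
  y + B ((2 : ℝ) • A y - y) - A y

variable {A B : H → H}

theorem FirmlyNonexpansive.douglasRachfordOp (hA : FirmlyNonexpansive A)
    (hB : FirmlyNonexpansive B) : FirmlyNonexpansive (douglasRachfordOp A B) := by
  rw [firmlyNonexpansive_iff_lipschitzWith_reflection] at *
  have := hB.comp hA
  rw [mul_one] at this
  convert this using 2 with y
  simp only [_root_.douglasRachfordOp, Function.comp_apply]
  module

variable {f h : H → EReal}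

theorem exists_isFixedPt_douglasRachfordOp (hf : ProperFn f) (hh : ProperFn h)
    (hA : IsSubdiffResolvent h A) (hB : IsSubdiffResolvent f B)
    (hzero : ∃ x, ∃ u ∈ subdiff f x, ∃ v ∈ subdiff h x, u + v = 0) :
    ∃ y, IsFixedPt (douglasRachfordOp A B) y := by
  obtain ⟨x, u, hu, v, hv, huv⟩ := hzero
  have hAx : A (x + v) = x := hA.apply_add_eq hh hv
  have hBx : B ((2 : ℝ) • x - (x + v)) = x := by
    rw [show (2 : ℝ) • x - (x + v) = x + u by rw [eq_neg_of_add_eq_zero_left huv]; module]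
    exact hB.apply_add_eq hf hu
  exact ⟨x + v, by rw [IsFixedPt, douglasRachfordOp, hAx, hBx, add_sub_cancel_right]⟩

theorem mem_subdiff_of_isFixedPt_douglasRachfordOp (hA : IsSubdiffResolvent h A)
    (hB : IsSubdiffResolvent f B) {y : H} (hy : IsFixedPt (douglasRachfordOp A B) y) :
    y - A y ∈ subdiff h (A y) ∧ A y - y ∈ subdiff f (A y) := by
  have hBy : B ((2 : ℝ) • A y - y) = A y := by
    have := hy.eq
    rwa [douglasRachfordOp, add_sub_assoc, add_eq_left, sub_eq_zero] at this
  refine ⟨hA y, ?_⟩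
  have := hB ((2 : ℝ) • A y - y)
  rwa [hBy, show (2 : ℝ) • A y - y - A y = A y - y by module] at this

/-- The sum in `hmono` is affine in `(x n, y n)` up to terms that vanish with `x n - z n`, so it
passes to weak limits, where it equals `-‖q - a‖ ^ 2 - ‖q - c‖ ^ 2`. -/
theorem eq_of_weakTendsto_of_inner_nonneg {x y z : ℕ → H} {a b c q : H}
    (hmono : ∀ n, 0 ≤ ⟪x n - a, (y n - x n) - (b - a)⟫
      + ⟪z n - c, ((2 : ℝ) • x n - y n - z n) - ((2 : ℝ) • q - b - c)⟫)
    (hy : IsBounded (range y)) (hxz : Tendsto (fun n => ‖x n - z n‖) atTop (𝓝 0))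
    (hxq : WeakTendsto x q) (hyb : WeakTendsto y b) : q = a := by
  obtain ⟨C, hC⟩ := isBounded_iff_forall_norm_le.1 hy
  set d := (2 : ℝ) • q - b - c
  have hid (n : ℕ) : ⟪x n - a, (y n - x n) - (b - a)⟫ + ⟪z n - c, ((2 : ℝ) • x n - y n - z n) - d⟫
      = (⟪x n - z n, y n + (d - c)⟫ - ‖x n - z n‖ ^ 2) + ⟪x n, (2 : ℝ) • a - b - d - c⟫
        + ⟪y n, c - a⟫ + (⟪a, b - a⟫ + ⟪c, d⟫) := by
    simp only [inner_sub_left, inner_sub_right, inner_add_right, real_inner_smul_right,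
      ← real_inner_self_eq_norm_sq]
    linarith [real_inner_comm a (y n), real_inner_comm a (x n), real_inner_comm (x n) (z n),
      real_inner_comm c (x n), real_inner_comm c (y n), real_inner_comm c (z n)]
  have he : Tendsto (fun n => ⟪x n - z n, y n + (d - c)⟫) atTop (𝓝 0) := by
    refine squeeze_zero_norm (fun n => (norm_inner_le_norm _ _).trans
      (mul_le_mul_of_nonneg_left ((norm_add_le _ _).trans ?_) (norm_nonneg _)))
      (by simpa using hxz.mul_const (C + ‖d - c‖))
    linarith [hC _ (mem_range_self n)]
  have hlim := ((((he.sub (by simpa using hxz.pow 2)).add (hxq ((2 : ℝ) • a - b - d - c))).add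
    (hyb (c - a))).add_const (⟪a, b - a⟫ + ⟪c, d⟫)).congr fun n => (hid n).symm
  have hval : 0 - 0 + ⟪q, (2 : ℝ) • a - b - d - c⟫ + ⟪b, c - a⟫ + (⟪a, b - a⟫ + ⟪c, d⟫)
      = -‖q - a‖ ^ 2 - ‖q - c‖ ^ 2 := by
    simp only [d, inner_sub_left, inner_sub_right, real_inner_smul_right,
      ← real_inner_self_eq_norm_sq]
    linarith [real_inner_comm b c, real_inner_comm a b, real_inner_comm q c, real_inner_comm q a]
  have := ge_of_tendsto' hlim hmono
  rw [hval] at this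
  exact sub_eq_zero.1 (norm_eq_zero.1 (by nlinarith [norm_nonneg (q - a), sq_nonneg ‖q - c‖]))

theorem douglasRachford_weakTendsto [CompleteSpace H] (hf : ProperFn f) (hh : ProperFn h)
    (hA : IsSubdiffResolvent h A) (hB : IsSubdiffResolvent f B)
    (hzero : ∃ x, ∃ u ∈ subdiff f x, ∃ v ∈ subdiff h x, u + v = 0) {lam : ℕ → ℝ}
    (hlam : ∀ n, lam n ∈ Icc (0 : ℝ) 2)
    (hdiv : Tendsto (fun N => ∑ n ∈ Finset.range N, lam n * (2 - lam n)) atTop atTop)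
    {x y z : ℕ → H} (hx : ∀ n, x n = A (y n)) (hz : ∀ n, z n = B ((2 : ℝ) • x n - y n))
    (hy : ∀ n, y (n + 1) = y n + lam n • (z n - x n)) :
    ∃ xbar, (∀ w, f xbar + h xbar ≤ f w + h w) ∧ WeakTendsto x xbar := by
  have hT := (hA.firmlyNonexpansive hh).douglasRachfordOp (hB.firmlyNonexpansive hf)
  have hres (n : ℕ) : douglasRachfordOp A B (y n) - y n = z n - x n := by
    rw [douglasRachfordOp, hz, hx]; abel
  have hyT (n : ℕ) : y (n + 1) = y n + lam n • (douglasRachfordOp A B (y n) - y n) := by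
    rw [hres, hy]
  obtain ⟨b, hb, hyb, hlim⟩ :=
    hT.exists_weakTendsto_of_relaxed (exists_isFixedPt_douglasRachfordOp hf hh hA hB hzero) hlam
      hdiv hyT
  obtain ⟨hbh, hbf⟩ := mem_subdiff_of_isFixedPt_douglasRachfordOp hA hB hb
  refine ⟨A b, le_add_of_mem_subdiff_of_add_eq_zero hbf hbh (by abel), ?_⟩
  have hybdd := hT.isBounded_range hb hlam hyT
  have hxbdd : IsBounded (range x) := by
    rw [show x = A ∘ y from funext hx, range_comp]
    exact (hA.firmlyNonexpansive hh).lipschitzWith.isBounded_image hybdd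
  have hxz : Tendsto (fun n => ‖x n - z n‖) atTop (𝓝 0) := by
    simpa only [hres, norm_sub_rev] using hlim
  refine weakTendsto_of_forall_subseq hxbdd fun φ hφ q hq => ?_
  refine eq_of_weakTendsto_of_inner_nonneg (c := B ((2 : ℝ) • q - b)) (fun n => add_nonneg ?_ ?_)
    (hybdd.subset (range_comp_subset_range φ y)) (hxz.comp hφ) hq (hyb.comp hφ)
  · exact hh.inner_sub_nonneg_of_mem_subdiff (by rw [hx]; exact hA _) hbh
  · exact hf.inner_sub_nonneg_of_mem_subdiff (by rw [hz]; exact hB _) (hB _)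

end DouglasRachford

/-- Proposition 4.2 (Douglas–Rachford): the sequence `(x_n)` produced by the
Douglas–Rachford iteration applied to `f` and `h = comix(L_k,g_k)` converges weakly to a
minimizer of `f + h`. -/
theorem douglasRachford_comix [CompleteSpace H] [∀ k, CompleteSpace (G k)]
    (L : ∀ k, H →L[ℝ] G k) (g : ∀ k, (G k) → EReal) (α : Fin p → ℝ)
    (hg : ∀ k, Gamma0 (g k)) (hL : ∀ k, ‖L k‖ ≤ 1)
    (hα : ∀ k, α k ∈ Set.Ioc (0 : ℝ) 1) (hαsum : ∑ k, α k = 1)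
    (f : H → EReal) (hf : Gamma0 f)
    (hrange : ∃ x : H, ∃ u ∈ subdiff f x, ∃ v ∈ subdiff (comix L g α) x, u + v = 0)
    (P : ∀ k, G k → G k) (hP : ∀ k, IsProx (g k) (P k))
    (Pf : H → H) (hPf : IsProx f Pf)
    (lam : ℕ → ℝ) (hlam : ∀ n, lam n ∈ Set.Ioo (0 : ℝ) 2)
    (hlamdiv : Tendsto (fun N => ∑ n ∈ Finset.range N, lam n * (2 - lam n)) atTop atTop)
    (x y z : ℕ → H)
    (hx : ∀ n, x n = y n + ∑ k, α k •
      (ContinuousLinearMap.adjoint (L k)) (P k (L k (y n)) - L k (y n)))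
    (hz : ∀ n, z n = Pf ((2 : ℝ) • x n - y n))
    (hy : ∀ n, y (n + 1) = y n + lam n • (z n - x n)) :
    ∃ xbar : H,
      (∀ w : H, f xbar + comix L g α xbar ≤ f w + comix L g α w) ∧
      ∀ u : H, Tendsto (fun n => (⟪x n, u⟫ : ℝ)) atTop (nhds (⟪xbar, u⟫ : ℝ)) := by
  have hsmooth := ConvexOneSmooth.sum (fun k =>
    ((hP k).convexOneSmooth_menvReal (hg k).1 (hg k).2.2).comp_clm (L k) (hL k))
    (fun k => (hα k).1.le) hαsum
  have hx' (n : ℕ) : x n = y n - ∑ k, α k •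
      ContinuousLinearMap.adjoint (L k) (L k (y n) - P k (L k (y n))) := by
    simp only [hx n, sub_eq_add_neg, ← Finset.sum_neg_distrib, ← smul_neg, ← map_neg, neg_add_rev,
      neg_neg]
  rw [comix_eq_fconjSubQKConj (fun k => (hg k).1) hP] at hrange ⊢
  exact douglasRachford_weakTendsto hf.1 hsmooth.properFn_fconjSubQKConj
    hsmooth.isSubdiffResolvent (hPf.isSubdiffResolvent hf.1 hf.2.2) hrange
    (fun n => Ioo_subset_Icc_self (hlam n)) hlamdiv hx' hz hy

end
end
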